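/- arXiv:0907.0814 — 8 statements merged into one kernel-verified Lean document; each statement's English description precedes it below -/
import Mathlib

section
/- Let G, T, (z_t)_{t∈T}, M, Σ, λ, φ, W and f ∈ Σ with φ(f) = χ_W be as follows: (z_t)_{t∈T} are linearly independent in ℂ[G] spanning M, Σ ⊆ M is closed under multiplication, φ : M → ClassFun(G) is linear with φ(z_t) = λ(t) an irreducible character for each t, and φ is multiplicative on Σ. Assume moreover that each z_t is a 0/1-sum z_t = Σ_{σ ∈ T_t} σ over a nonempty subset T_t ⊆ G, that the supports T_t are pairwise disjoint, and write f = Σ_{s ∈ S} ω_s s with S = supp(f) and ω_s = [s]f. Then for every irreducible character χ of G, every d ≥ 1, and every choice of elements σ_t ∈ T_t, the multiplicity of χ in W^{⊗d} equals Σ_{t∈T, λ(t)=χ} Σ_{w} ω_{w_1}⋯ω_{w_d}, where the inner sum ranges over all words w = (w_1,…,w_d) ∈ S^d with w_1 w_2 ⋯ w_d = σ_t. -/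
open CategoryTheory Module ComplexConjugate Function

/-! Since `Sig` is closed under multiplication, `f ^ d ∈ Sig ⊆ span z`, say `f ^ d = ∑ c_t z_t`.
As the supports `T_t` are disjoint, `c_t` is the coefficient of `f ^ d` at any `σ ∈ T_t`, which
is the weighted number of words over `supp f` reducing to `σ`. Applying `φ` gives
`χ_W ^ d = ∑ c_t λ(t)`, and orthonormality of irreducible characters (with
`χ(g⁻¹) = conj χ(g)`) picks out the `t` with `λ(t) = χ`. -/

namespace Module.End

variable {K V : Type*} [Field K] [AddCommGroup V] [Module K V]

lemma isSemisimple_of_pow_eq_one {u : End K V} {n : ℕ} (hn : (n : K) ≠ 0) (hu : u ^ n = 1) :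
    u.IsSemisimple :=
  isSemisimple_of_squarefree_aeval_eq_zero
    (Polynomial.separable_X_pow_sub_C 1 hn one_ne_zero).squarefree (by simp [hu])

variable [IsAlgClosed K] [FiniteDimensional K V] {u : End K V}

lemma IsSemisimple.isInternal_eigenspace [DecidableEq K] (hu : u.IsSemisimple) :
    DirectSum.IsInternal u.eigenspace :=
  (DirectSum.isInternal_submodule_iff_iSupIndep_and_iSup_eq_top _).mpr
    ⟨u.eigenspaces_iSupIndep, hu.iSup_eigenspace_eq_top⟩

lemma IsSemisimple.trace_eq_sum_mul_finrank_eigenspace (hu : u.IsSemisimple) {g : End K V}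
    (c : K → K) (hg : ∀ μ, ∀ v ∈ u.eigenspace μ, g v = c μ • v) :
    LinearMap.trace K V g = ∑ μ : u.Eigenvalues, c μ * finrank K (u.eigenspace μ) := by
  classical
  have hmaps (μ : K) : Set.MapsTo g (u.eigenspace μ) (u.eigenspace μ) := fun v hv ↦ by
    rw [SetLike.mem_coe, hg μ v hv]; exact Submodule.smul_mem _ _ hv
  have hrestrict (μ : K) : g.restrict (hmaps μ) = c μ • LinearMap.id := by
    ext ⟨v, hv⟩; exact hg μ v hv
  have hfin : {μ | u.eigenspace μ ≠ ⊥}.Finite := u.finite_hasEigenvalue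
  rw [LinearMap.trace_eq_sum_trace_restrict' hu.isInternal_eigenspace hfin hmaps,
    Finset.sum_subtype (p := u.HasEigenvalue) _ fun μ ↦ hfin.mem_toFinset]
  simp [hrestrict]; rfl

end Module.End

lemma Module.End.trace_pow_pred_eq_conj_trace {V : Type*} [AddCommGroup V] [Module ℂ V]
    [FiniteDimensional ℂ V] {u : End ℂ V} {n : ℕ} (hn : n ≠ 0) (hu : u ^ n = 1) :
    LinearMap.trace ℂ V (u ^ (n - 1)) = conj (LinearMap.trace ℂ V u) := by
  have hss := isSemisimple_of_pow_eq_one (Nat.cast_ne_zero.2 hn) hu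
  -- eigenvalues of `u` are `n`-th roots of unity, so `μ ^ (n - 1) = μ⁻¹ = conj μ`
  have hconj (μ : ℂ) (v : V) (hv : v ∈ u.eigenspace μ) : (u ^ (n - 1)) v = conj μ • v := by
    obtain rfl | hv0 := eq_or_ne v 0
    · simp
    have hvec : u.HasEigenvector μ v := ⟨hv, hv0⟩
    have hμn : μ ^ n = 1 := by
      have h := hvec.pow_apply n
      rw [hu, one_apply] at h
      exact (smul_left_injective ℂ hv0 (h.symm.trans (one_smul ℂ v).symm))
    have hμ0 : μ ≠ 0 := by rintro rfl; simp [hn] at hμn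
    rw [hvec.pow_apply, ← Complex.inv_eq_conj (Complex.norm_eq_one_of_pow_eq_one hμn hn),
      pow_sub₀ μ hμ0 (Nat.one_le_iff_ne_zero.2 hn), hμn, pow_one, one_mul]
  rw [hss.trace_eq_sum_mul_finrank_eigenspace _ hconj,
    hss.trace_eq_sum_mul_finrank_eigenspace id fun μ v hv ↦ mem_eigenspace_iff.mp hv, map_sum]
  simp

namespace FDRep

variable {G : Type*} [Group G]

lemma char_inv [Finite G] (V : FDRep ℂ G) (g : G) : V.character g⁻¹ = conj (V.character g) := by
  have hinv : g⁻¹ = g ^ (orderOf g - 1) := inv_eq_of_mul_eq_one_right <| by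
    rw [← pow_succ', Nat.sub_add_cancel (orderOf_pos g), pow_orderOf_eq_one]
  have hpow : V.ρ g ^ orderOf g = 1 := by rw [← map_pow, pow_orderOf_eq_one, map_one]
  rw [hinv, character, map_pow]
  exact Module.End.trace_pow_pred_eq_conj_trace (orderOf_pos g).ne' hpow

end FDRep

section ClassFunction

variable {G : Type*} [Fintype G]

noncomputable def classFunInner (ψ : G → ℂ) : (G → ℂ) →ₗ[ℂ] ℂ where
  toFun φ := (Fintype.card G : ℂ)⁻¹ * ∑ g, φ g * conj (ψ g)
  map_add' φ φ' := by simp only [Pi.add_apply, add_mul, Finset.sum_add_distrib, mul_add]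
  map_smul' a φ := by simp only [Pi.smul_apply, smul_eq_mul, mul_assoc, ← Finset.mul_sum,
    RingHom.id_apply, mul_left_comm]

lemma classFunInner_apply (ψ φ : G → ℂ) :
    classFunInner ψ φ = (Fintype.card G : ℂ)⁻¹ * ∑ g, φ g * conj (ψ g) := rfl

variable [Group G]

open scoped Classical in
lemma classFunInner_character_eq_ite_nonempty_iso (V W : FDRep ℂ G) [Simple V] [Simple W] :
    classFunInner W.character V.character = if Nonempty (V ≅ W) then 1 else 0 := by
  have : Invertible (Nat.card G : ℂ) := invertibleOfNonzero (by simp)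
  simpa [classFunInner_apply, FDRep.char_inv, Nat.card_eq_fintype_card] using
    FDRep.char_orthonormal V W

lemma FDRep.character_eq_iff_nonempty_iso (V W : FDRep ℂ G) [Simple V] [Simple W] :
    V.character = W.character ↔ Nonempty (V ≅ W) := by
  classical
  refine ⟨fun h ↦ by_contra fun hVW ↦ ?_, fun ⟨i⟩ ↦ FDRep.char_iso i⟩
  have hinner := classFunInner_character_eq_ite_nonempty_iso V W
  rw [h, classFunInner_character_eq_ite_nonempty_iso, if_neg hVW, if_pos ⟨Iso.refl W⟩] at hinner
  exact one_ne_zero hinner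

lemma classFunInner_character_of_simple (V W : FDRep ℂ G) [Simple V] [Simple W] :
    classFunInner W.character V.character = if V.character = W.character then 1 else 0 := by
  classical
  rw [classFunInner_character_eq_ite_nonempty_iso]
  exact if_congr (FDRep.character_eq_iff_nonempty_iso V W).symm rfl rfl

end ClassFunction

section MulClosed

variable {A B S : Type*} [Monoid A] [Monoid B] [SetLike S A] {s : S}

lemma pow_succ_mem_of_mul_mem (hs : ∀ a b, a ∈ s → b ∈ s → a * b ∈ s) {a : A} (ha : a ∈ s)
    (k : ℕ) : a ^ (k + 1) ∈ s := by
  induction k with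
  | zero => simpa using ha
  | succ k ih => rw [pow_succ]; exact hs _ _ ih ha

lemma map_pow_succ_of_map_mul (hs : ∀ a b, a ∈ s → b ∈ s → a * b ∈ s) (F : s → B)
    (hF : ∀ a b (ha : a ∈ s) (hb : b ∈ s), F ⟨a * b, hs a b ha hb⟩ = F ⟨a, ha⟩ * F ⟨b, hb⟩)
    {a : A} (ha : a ∈ s) (k : ℕ) :
    F ⟨a ^ (k + 1), pow_succ_mem_of_mul_mem hs ha k⟩ = F ⟨a, ha⟩ ^ (k + 1) := by
  induction k with
  | zero => simp only [zero_add, pow_one]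
  | succ k ih =>
    calc F ⟨a ^ (k + 2), _⟩ = F ⟨a ^ (k + 1) * a, hs _ _ (pow_succ_mem_of_mul_mem hs ha k) ha⟩ :=
          congrArg F (Subtype.ext (pow_succ a (k + 1)))
      _ = F ⟨a, ha⟩ ^ (k + 2) := by rw [hF _ _ (pow_succ_mem_of_mul_mem hs ha k) ha, ih, ← pow_succ]

end MulClosed

namespace MonoidAlgebra

variable {k G : Type*}

section Semiring

variable [Semiring k]

lemma coeff_sum_single_one [DecidableEq G] (s : Finset G) (σ : G) :
    (∑ σ' ∈ s, single σ' (1 : k)).coeff σ = if σ ∈ s then 1 else 0 := by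
  simp [coeff_sum, Finset.sum_apply', Finsupp.single_apply]

lemma coeff_sum_smul_sum_single_one {ι : Type*} [Fintype ι] {T : ι → Finset G}
    (hT : Pairwise (Disjoint on T)) (c : ι → k) {t : ι} {σ : G} (hσ : σ ∈ T t) :
    (∑ t', c t' • ∑ σ' ∈ T t', single σ' (1 : k)).coeff σ = c t := by
  classical
  rw [coeff_sum, Finset.sum_apply', Finset.sum_eq_single t]
  · rw [coeff_smul_apply, coeff_sum_single_one, if_pos hσ, smul_eq_mul, mul_one]
  · intro t' _ ht'
    rw [coeff_smul_apply, coeff_sum_single_one, if_neg (Finset.disjoint_right.mp (hT ht') hσ),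
      smul_zero]
  · simp

end Semiring

section CommSemiring

variable [CommSemiring k] [Monoid G]

lemma pow_eq_sum_single_words (f : MonoidAlgebra k G) (d : ℕ) :
    f ^ d = ∑ w : Fin d → f.coeff.support,
      single (List.ofFn fun j ↦ (w j : G)).prod (∏ j, f.coeff (w j)) := by
  induction d with
  | zero => simp [one_def]
  | succ d ih =>
    have hf : ∑ s : f.coeff.support, single (s : G) (f.coeff s) = f :=
      (Finset.sum_coe_sort _ _).trans (sum_coeff_single f)
    calc f ^ (d + 1) = (∑ s : f.coeff.support, single (s : G) (f.coeff s)) * f ^ d := by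
          rw [hf, pow_succ']
      _ = _ := by
          rw [ih, Finset.sum_mul_sum, ← (Fin.consEquiv fun _ ↦ f.coeff.support).sum_comp,
            Fintype.sum_prod_type]
          simp [Fin.consEquiv, List.ofFn_succ, Fin.prod_univ_succ]

lemma coeff_pow_eq_sum_words [DecidableEq G] (f : MonoidAlgebra k G) (d : ℕ) (σ : G) :
    (f ^ d).coeff σ = ∑ w ∈ Finset.univ.filter
        (fun w : Fin d → f.coeff.support ↦ (List.ofFn fun j ↦ (w j : G)).prod = σ),
      ∏ j, f.coeff (w j) := by
  rw [pow_eq_sum_single_words, coeff_sum, Finset.sum_apply', Finset.sum_filter]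
  simp [Finsupp.single_apply]

end CommSemiring

end MonoidAlgebra

/-- **General method: multiplicities in tensor powers count weighted words in a Cayley graph.**
With the setup of the general method (a linearly independent family `z t` spanning `M`,
a multiplicatively closed subspace `Sig ⊆ M`, a linear `φ : M → ClassFun(G)` sending `z t`
to the irreducible character `lam t` and multiplicative on `Sig`), assume moreover each
`z t` is the 0/1-sum of a nonempty subset `Tset t ⊆ G`, the `Tset t` are pairwise disjoint,
and `f ∈ Sig` satisfies `φ f = χ_W`.  Then for every irreducible character `χ = X.character`,
every `d ≥ 1` and every choice `σsel t ∈ Tset t`, the multiplicity of `χ` in `W^{⊗d}` equals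
`∑_{t : lam t = χ} ∑_w ω(w)`, the inner sum over all words `w` of length `d` over
`supp f` with `w₁ ⋯ w_d = σsel t`, weighted by `ω(w) = ∏ ([w_j] f)`. -/
theorem multiplicity_in_tensor_power_eq_weighted_word_count
    {G : Type} [Group G] [Fintype G] [DecidableEq G]
    {T : Type} [Fintype T]
    (z : T → MonoidAlgebra ℂ G)
    (M : Submodule ℂ (MonoidAlgebra ℂ G)) (hM : M = Submodule.span ℂ (Set.range z))
    (Sig : Submodule ℂ (MonoidAlgebra ℂ G)) (hSigM : Sig ≤ M)
    (hSigmul : ∀ f g : MonoidAlgebra ℂ G, f ∈ Sig → g ∈ Sig → f * g ∈ Sig)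
    (lam : T → (G → ℂ))
    (hlam : ∀ t, ∃ X : FDRep ℂ G, Simple X ∧ lam t = X.character)
    (φ : M →ₗ[ℂ] (G → ℂ))
    (hφz : ∀ t, φ ⟨z t, by rw [hM]; exact Submodule.subset_span (Set.mem_range_self t)⟩ = lam t)
    (hφmul : ∀ (f g : MonoidAlgebra ℂ G) (hf : f ∈ Sig) (hg : g ∈ Sig),
      φ ⟨f * g, hSigM (hSigmul f g hf hg)⟩ = φ ⟨f, hSigM hf⟩ * φ ⟨g, hSigM hg⟩)
    (Tset : T → Finset G)
    (hTdisj : ∀ t t', t ≠ t' → Disjoint (Tset t) (Tset t'))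
    (hzT : ∀ t, z t = ∑ σ ∈ Tset t, MonoidAlgebra.single σ (1 : ℂ))
    (W : FDRep ℂ G) (f : MonoidAlgebra ℂ G) (hf : f ∈ Sig)
    (hφf : φ ⟨f, hSigM hf⟩ = W.character)
    (X : FDRep ℂ G) [Simple X]
    (d : ℕ) (hd : 1 ≤ d)
    (σsel : T → G) (hσsel : ∀ t, σsel t ∈ Tset t) :
    (Fintype.card G : ℂ)⁻¹ * ∑ g : G, (W.character g) ^ d * (starRingEnd ℂ) (X.character g) =
      ∑ t ∈ Finset.univ.filter (fun t => lam t = X.character),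
        ∑ w ∈ Finset.univ.filter
            (fun w : Fin d → {x // x ∈ f.coeff.support} =>
              (List.ofFn fun j => ((w j : G))).prod = σsel t),
          ∏ j : Fin d, f.coeff (w j : G) := by
  obtain ⟨e, rfl⟩ : ∃ e, d = e + 1 := ⟨d - 1, by omega⟩
  have hzM (t : T) : z t ∈ M := hM ▸ Submodule.subset_span (Set.mem_range_self t)
  have hpow : f ^ (e + 1) ∈ Sig := pow_succ_mem_of_mul_mem hSigmul hf e
  obtain ⟨c, hc⟩ := (Submodule.mem_span_range_iff_exists_fun ℂ).mp (hM ▸ hSigM hpow)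
  have hcoeff (t : T) : c t = (f ^ (e + 1)).coeff (σsel t) := by
    simp_rw [← hc, hzT]
    exact (MonoidAlgebra.coeff_sum_smul_sum_single_one hTdisj c (hσsel t)).symm
  have hchar : W.character ^ (e + 1) = ∑ t, c t • lam t := by
    have hsum : (⟨f ^ (e + 1), hSigM hpow⟩ : M) = ∑ t, c t • ⟨z t, hzM t⟩ := by
      ext; simp [← hc]
    rw [← hφf, ← map_pow_succ_of_map_mul hSigmul (fun x ↦ φ ⟨x, hSigM x.2⟩) hφmul hf e, hsum,
      map_sum]
    simp_rw [map_smul, hφz]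
  calc _ = classFunInner X.character (W.character ^ (e + 1)) := rfl
    _ = ∑ t, c t * classFunInner X.character (lam t) := by simp [hchar, map_sum]
    _ = ∑ t ∈ Finset.univ.filter (fun t ↦ lam t = X.character), c t := by
      rw [Finset.sum_filter]
      refine Finset.sum_congr rfl fun t _ ↦ ?_
      obtain ⟨Y, _, hY⟩ := hlam t
      rw [hY, classFunInner_character_of_simple, mul_ite, mul_one, mul_zero]
    _ = _ := by simp_rw [hcoeff, MonoidAlgebra.coeff_pow_eq_sum_words]
end

section
/- Let n ≥ 2 and d ≥ 0. The dimension over ℂ of the space of S_n-invariant tensors in (ℂ^n)^{⊗d}, where ℂ^n carries the permutation action of S_n, equals the number of words of length d over the set {e} ∪ C_n (the identity together with the permutations with descent set {1}) that reduce to the identity permutation. -/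
/-- The cycle `σ_k = (1 k k-1 ⋯ 3 2)` of `S_n` (1-based: `σ_k(1) = k`,
`σ_k(i) = i-1` for `2 ≤ i ≤ k`, `σ_k(i) = i` for `i > k`), written 0-based on `Fin n`:
it sends `0 ↦ k-1`, `i ↦ i-1` for `1 ≤ i ≤ k-1`, and fixes `i ≥ k`. -/
def sigmaPerm (n k : ℕ) (hk : 2 ≤ k) (hkn : k ≤ n) : Equiv.Perm (Fin n) where
  toFun i := ⟨if (i : ℕ) = 0 then k - 1 else if (i : ℕ) ≤ k - 1 then (i : ℕ) - 1 else (i : ℕ),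
    by have := i.isLt; split_ifs <;> omega⟩
  invFun i := ⟨if (i : ℕ) = k - 1 then 0 else if (i : ℕ) < k - 1 then (i : ℕ) + 1 else (i : ℕ),
    by have := i.isLt; split_ifs <;> omega⟩
  left_inv := by
    intro i
    have := i.isLt
    apply Fin.ext
    simp only [Fin.val_mk]
    split_ifs <;> first
      | omega
      | (simp_all only [Fin.val_mk] <;> omega)
  right_inv := by
    intro i
    have := i.isLt
    apply Fin.ext
    simp only [Fin.val_mk]
    split_ifs <;> first
      | omega
      | (simp_all only [Fin.val_mk] <;> omega)

/-- The set `C_n = {σ_2, …, σ_n}` of the permutations of `{1, …, n}`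
whose descent set is `{1}`. -/
def Cn (n : ℕ) : Finset (Equiv.Perm (Fin n)) :=
  (Finset.Icc 2 n).attach.image fun k : {x // x ∈ Finset.Icc 2 n} =>
    sigmaPerm n k.1 (Finset.mem_Icc.mp k.2).1 (Finset.mem_Icc.mp k.2).2

/-- `D_{{1}}`: the sum of all permutations of `{1, …, n}` with descent set `{1}`,
as an element of the group algebra `ℚ[S_n]`. -/
noncomputable def Done (n : ℕ) : MonoidAlgebra ℚ (Equiv.Perm (Fin n)) :=
  ∑ σ ∈ Cn n, MonoidAlgebra.single σ (1 : ℚ)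

/-- The permutation representation of `S_n` on `ℂ^n`. -/
noncomputable def permRep (n : ℕ) : Representation ℂ (Equiv.Perm (Fin n)) (Fin n → ℂ) where
  toFun g := LinearMap.funLeft ℂ ℂ ⇑g⁻¹
  map_one' := by ext v i; simp
  map_mul' g h := by
    ext v i
    simp [LinearMap.funLeft_apply, Module.End.mul_apply, mul_inv_rev]

/-- The geometric module `V = {v ∈ ℂ^n : v_1 + ⋯ + v_n = 0}` as a subspace of `ℂ^n`. -/
noncomputable def geomSubmodule (n : ℕ) : Submodule ℂ (Fin n → ℂ) where
  carrier := {v | ∑ i, v i = 0}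
  add_mem' := by
    intro a b ha hb
    simp only [Set.mem_setOf_eq] at *
    simp [Finset.sum_add_distrib, ha, hb]
  zero_mem' := by simp
  smul_mem' := by
    intro c v hv
    simp only [Set.mem_setOf_eq, Pi.smul_apply, smul_eq_mul] at *
    rw [← Finset.mul_sum, hv, mul_zero]

lemma permRep_mem_geom (n : ℕ) (g : Equiv.Perm (Fin n)) :
    ∀ v ∈ geomSubmodule n, permRep n g v ∈ geomSubmodule n := by
  intro v hv
  have hv' : ∑ i, v i = 0 := hv
  show ∑ i, (permRep n g v) i = 0
  have : ∀ i, (permRep n g v) i = v (g⁻¹ i) := fun i => rfl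
  simp only [this]
  rw [Equiv.sum_comp g⁻¹ v]
  exact hv'

/-- The geometric representation of `S_n` on `V = {v ∈ ℂ^n : Σ v_i = 0}`,
by permutation of coordinates. -/
noncomputable def geomRep (n : ℕ) : Representation ℂ (Equiv.Perm (Fin n)) (geomSubmodule n) where
  toFun g := (permRep n g).restrict (permRep_mem_geom n g)
  map_one' := by
    refine LinearMap.ext fun v => Subtype.ext ?_
    simp [LinearMap.restrict_apply]
  map_mul' g h := by
    refine LinearMap.ext fun v => Subtype.ext ?_
    simp [LinearMap.restrict_apply, Module.End.mul_apply]

/-- The `d`-fold tensor power of a representation, with diagonal action. -/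
noncomputable def tpowRep {G V : Type*} [Group G] [AddCommGroup V] [Module ℂ V]
    (ρ : Representation ℂ G V) (d : ℕ) :
    Representation ℂ G (PiTensorProduct ℂ (fun _ : Fin d => V)) where
  toFun g := PiTensorProduct.map fun _ => ρ g
  map_one' := by
    show PiTensorProduct.map (fun _ : Fin d => ρ 1) = 1
    have : (fun _ : Fin d => ρ 1) = fun _ : Fin d => (1 : V →ₗ[ℂ] V) := by
      funext _; rw [map_one]
    rw [this, PiTensorProduct.map_one]
  map_mul' g h := by
    show PiTensorProduct.map (fun _ : Fin d => ρ (g * h)) =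
      PiTensorProduct.map (fun _ : Fin d => ρ g) * PiTensorProduct.map (fun _ : Fin d => ρ h)
    have : (fun _ : Fin d => ρ (g * h)) = fun _ : Fin d => ρ g * ρ h := by
      funext _; rw [map_mul]
    rw [this, PiTensorProduct.map_mul]

/-- The dimension over `ℂ` of the space of `G`-invariant tensors in the `d`-fold
tensor power `V^{⊗d}` (with diagonal `G`-action) of a representation `ρ` on `V`. -/
noncomputable def invariantDim {G V : Type*} [Group G] [AddCommGroup V] [Module ℂ V]
    (ρ : Representation ℂ G V) (d : ℕ) : ℕ :=
  Module.finrank ℂ ((tpowRep ρ d).invariants)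

/-!
The invariant tensors have the orbit sums of the tensor basis `e_{c 0} ⊗ ⋯ ⊗ e_{c (d-1)}` as a
basis, so their dimension is the number of `S_n`-orbits of maps `c : Fin d → Fin n`.

Since `σ_{t+1} = (0 1 ⋯ t)⁻¹`, a word over `{e} ∪ C_n` is a sequence of shuffles of a deck of
`n` cards, each moving the card at some position `t` to the top, and it reduces to the identity
iff the deck ends in its initial order. Recording the cards moved instead of their positions is a
bijection. The final deck has the moved cards on top, the most recently moved first, and the
others below in their initial order. Hence, among the relabellings of a sequence `c` of moved
cards, exactly one ends with the deck in order (relabel each card by its final position), so the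
words reducing to the identity correspond to the orbits.
-/

open MulAction Equiv

section PermutationBasis

variable {k G ι M : Type*} [Field k] [Group G] [MulAction G ι] [AddCommGroup M] [Module k M]
  {ρ : Representation k G M} {b : Module.Basis ι k M}

theorem Representation.basis_repr_apply_smul (hb : ∀ g i, ρ g (b i) = b (g • i))
    (g : G) (v : M) (i : ι) : b.repr (ρ g v) (g • i) = b.repr v i := by
  have : (Finsupp.lapply (g • i)).comp (b.repr.toLinearMap.comp (ρ g)) =
      (Finsupp.lapply i).comp b.repr.toLinearMap :=
    b.ext fun j => by
      simp [hb, Finsupp.single_apply_left (MulAction.injective g)]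
  exact DFunLike.congr_fun this v

theorem Representation.mem_invariants_iff_basis_repr (hb : ∀ g i, ρ g (b i) = b (g • i))
    (v : M) : v ∈ ρ.invariants ↔ ∀ (g : G) i, b.repr v (g • i) = b.repr v i := by
  refine ⟨fun hv g i => ?_, fun hv g => b.repr.injective <| Finsupp.ext fun j => ?_⟩
  · simpa [hv g] using Representation.basis_repr_apply_smul hb g v i
  · simpa using (Representation.basis_repr_apply_smul hb g v (g⁻¹ • j)).trans (hv g _).symm

theorem Representation.finrank_invariants_of_basis [Finite ι]
    (hb : ∀ g i, ρ g (b i) = b (g • i)) :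
    Module.finrank k ρ.invariants = Nat.card (orbitRel.Quotient G ι) := by
  have hmap : ρ.invariants.map (b.equivFun : M →ₗ[k] ι → k) =
      LinearMap.range (LinearMap.funLeft k k (Quotient.mk (orbitRel G ι))) := by
    ext x
    rw [Submodule.mem_map_equiv, mem_invariants_iff_basis_repr hb]
    simp only [← b.equivFun_apply, LinearEquiv.apply_symm_apply, LinearMap.mem_range]
    refine ⟨fun hx => ⟨Quotient.lift x ?_, rfl⟩, ?_⟩
    · rintro _ i ⟨g, rfl⟩
      exact hx g i
    · rintro ⟨c, rfl⟩ g i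
      exact congrArg c (Quotient.sound (mem_orbit i g))
  have := Fintype.ofFinite (orbitRel.Quotient G ι)
  rw [← b.equivFun.finrank_map_eq, hmap, LinearMap.finrank_range_of_inj
    (LinearMap.funLeft_injective_of_surjective _ _ _ Quotient.mk_surjective),
    Module.finrank_fintype_fun_eq_card, Nat.card_eq_fintype_card]

end PermutationBasis

theorem tpowRep_basis_piTensorProduct {G V ι : Type*} [Group G] [MulAction G ι] [Finite ι]
    [AddCommGroup V] [Module ℂ V] {ρ : Representation ℂ G V} {b : Module.Basis ι ℂ V}
    (hb : ∀ g i, ρ g (b i) = b (g • i)) (d : ℕ) (g : G) (f : Fin d → ι) :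
    tpowRep ρ d g (Basis.piTensorProduct (fun _ => b) f) =
      Basis.piTensorProduct (fun _ => b) (g • f) := by
  simp only [Basis.piTensorProduct_apply]
  exact (PiTensorProduct.map_tprod _ _).trans (by simp [hb])

theorem permRep_basisFun (n : ℕ) (g : Perm (Fin n)) (i : Fin n) :
    permRep n g (Pi.basisFun ℂ (Fin n) i) = Pi.basisFun ℂ (Fin n) (g • i) := by
  ext j
  simp [permRep, LinearMap.funLeft_apply, Pi.single_apply, Equiv.eq_symm_apply, eq_comm]

theorem invariantDim_permRep_eq_card_orbits (n d : ℕ) :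
    invariantDim (permRep n) d = Nat.card (orbitRel.Quotient (Perm (Fin n)) (Fin d → Fin n)) :=
  Representation.finrank_invariants_of_basis
    (tpowRep_basis_piTensorProduct (permRep_basisFun n) d)

theorem Fin.val_cycleRange {n : ℕ} (t x : Fin n) :
    (Fin.cycleRange t x : ℕ) =
      if (x : ℕ) = t then 0 else if (x : ℕ) < t then (x : ℕ) + 1 else (x : ℕ) := by
  rcases le_or_gt x t with h | h
  · rw [Fin.coe_cycleRange_of_le h]
    simp only [Fin.ext_iff]
    split_ifs <;> omega
  · rw [Fin.cycleRange_of_gt h]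
    split_ifs <;> omega

theorem Fin.cycleRange_lt_cycleRange_iff {n : ℕ} {t x y : Fin n} (hx : x ≠ t) (hy : y ≠ t) :
    Fin.cycleRange t x < Fin.cycleRange t y ↔ x < y := by
  rw [Fin.lt_def, Fin.lt_def, Fin.val_cycleRange, Fin.val_cycleRange]
  have := Fin.val_ne_of_ne hx
  have := Fin.val_ne_of_ne hy
  split_ifs <;> omega

theorem sigmaPerm_eq_inv_cycleRange (n k : ℕ) (hk : 2 ≤ k) (hkn : k ≤ n) :
    sigmaPerm n k hk hkn = (Fin.cycleRange ⟨k - 1, by omega⟩)⁻¹ := by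
  rw [← inv_eq_iff_eq_inv]
  ext x
  rw [Fin.val_cycleRange]
  rfl

theorem mem_insert_one_Cn_iff {n : ℕ} [NeZero n] {s : Perm (Fin n)} :
    s ∈ insert 1 (Cn n) ↔ ∃ t : Fin n, (Fin.cycleRange t)⁻¹ = s := by
  constructor
  · intro hs
    rcases Finset.mem_insert.mp hs with rfl | hs
    · exact ⟨0, by simp⟩
    · obtain ⟨⟨k, hk⟩, -, rfl⟩ := Finset.mem_image.mp hs
      exact ⟨_, (sigmaPerm_eq_inv_cycleRange ..).symm⟩
  · rintro ⟨t, rfl⟩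
    rcases eq_or_ne t 0 with rfl | ht
    · simp
    · refine Finset.mem_insert_of_mem (Finset.mem_image.mpr
        ⟨⟨(t : ℕ) + 1, Finset.mem_Icc.mpr ⟨?_, t.isLt⟩⟩, Finset.mem_attach _ _, ?_⟩)
      · have := Fin.val_ne_of_ne ht
        simp only [Fin.val_zero] at this
        omega
      · rw [sigmaPerm_eq_inv_cycleRange]
        rfl

noncomputable def equivInsertOneCn (n : ℕ) [NeZero n] : Fin n ≃ {s // s ∈ insert 1 (Cn n)} :=
  Equiv.ofBijective (fun t => ⟨(Fin.cycleRange t)⁻¹, mem_insert_one_Cn_iff.mpr ⟨t, rfl⟩⟩)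
    ⟨fun t t' h => by
      have h0 := congrArg (fun s : {s // s ∈ insert 1 (Cn n)} => (s : Perm (Fin n)) 0) h
      simpa [Perm.inv_eq_iff_eq] using h0,
    fun s => (mem_insert_one_Cn_iff.mp s.2).imp fun _ h => Subtype.ext h⟩

theorem Equiv.Perm.card_filter_apply_lt {n : ℕ} (p : Perm (Fin n)) (u : Fin n) :
    (Finset.univ.filter fun v => p v < p u).card = p u := by
  rw [Finset.card_equiv p (t := Finset.Iio (p u)) (by simp), Fin.card_Iio]

theorem Equiv.Perm.ext_of_lt_iff {n : ℕ} {p q : Perm (Fin n)}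
    (h : ∀ u v, p u < p v ↔ q u < q v) : p = q := by
  ext u
  rw [← p.card_filter_apply_lt, ← q.card_filter_apply_lt]
  simp only [h]

noncomputable def MulAction.subtypeEquivOrbitRelQuotient {G α : Type*} [Group G]
    [MulAction G α] (R : α → Prop) (exists_smul : ∀ x, ∃ g : G, R (g • x))
    (smul_eq : ∀ x (g : G), R x → R (g • x) → g • x = x) :
    {x // R x} ≃ orbitRel.Quotient G α :=
  Equiv.ofBijective (fun x => Quotient.mk _ x.1)
    ⟨fun x y h => by
      obtain ⟨g, hg : g • y.1 = x.1⟩ := Quotient.exact h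
      exact Subtype.ext (hg ▸ smul_eq y g y.2 (hg ▸ x.2)),
    fun q => q.inductionOn fun x =>
      (exists_smul x).elim fun g hg => ⟨⟨g • x, hg⟩, Quotient.sound (mem_orbit x g)⟩⟩

section Deck

variable {n : ℕ}

/- A deck of `n` cards is the permutation sending each card to its position, `0` being the top;
`moveToTop P c` moves the card `c` to the top. -/
def moveToTop (P : Perm (Fin n)) (c : Fin n) : Perm (Fin n) :=
  Fin.cycleRange (P c) * P

def deckAfter (P : Perm (Fin n)) (l : List (Fin n)) : Perm (Fin n) :=
  l.foldl moveToTop P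

/- For a card not in `l`, `idxOf` is `l.length`: such cards come after all moved ones, in their
order under `P`. -/
def deckKey (P : Perm (Fin n)) (l : List (Fin n)) (u : Fin n) : ℕ ×ₗ Fin n :=
  toLex (l.reverse.idxOf u, P u)

@[simp]
theorem deckAfter_nil (P : Perm (Fin n)) : deckAfter P [] = P := rfl

@[simp]
theorem deckAfter_cons (P : Perm (Fin n)) (c : Fin n) (l : List (Fin n)) :
    deckAfter P (c :: l) = deckAfter (moveToTop P c) l := rfl

theorem deckAfter_append_singleton (P : Perm (Fin n)) (l : List (Fin n)) (c : Fin n) :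
    deckAfter P (l ++ [c]) = moveToTop (deckAfter P l) c :=
  List.foldl_append ..

theorem deckAfter_lt_deckAfter_iff (P : Perm (Fin n)) (l : List (Fin n)) (u v : Fin n) :
    deckAfter P l u < deckAfter P l v ↔ deckKey P l u < deckKey P l v := by
  induction l using List.reverseRecOn generalizing u v with
  | nil => simp [deckKey, Prod.Lex.toLex_lt_toLex]
  | append_singleton l c ih =>
    have : NeZero n := .of_pos c.pos
    have hne {x : Fin n} (hx : x ≠ c) : deckAfter P l x ≠ deckAfter P l c :=
      (deckAfter P l).injective.ne hx
    simp only [deckKey, Prod.Lex.toLex_lt_toLex] at ih ⊢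
    rw [deckAfter_append_singleton, moveToTop, Perm.mul_apply, Perm.mul_apply,
      List.reverse_append, List.reverse_singleton, List.singleton_append]
    by_cases hu : u = c <;> by_cases hv : v = c
    · subst hu hv
      simp
    · subst hu
      have h0 := (Fin.cycleRange (deckAfter P l u)).injective.ne (hne hv)
      rw [Fin.cycleRange_self] at h0
      simp [List.idxOf_cons_ne _ (Ne.symm hv), Fin.pos_iff_ne_zero, h0]
    · subst hv
      simp [List.idxOf_cons_ne _ (Ne.symm hu)]
    · rw [Fin.cycleRange_lt_cycleRange_iff (hne hu) (hne hv), ih, List.idxOf_cons_ne _ (Ne.symm hu),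
        List.idxOf_cons_ne _ (Ne.symm hv)]
      simp

theorem deckKey_lt_deckKey_iff_of_mem (P : Perm (Fin n)) {l : List (Fin n)} {u : Fin n}
    (hu : u ∈ l) (v : Fin n) :
    deckKey P l v < deckKey P l u ↔ l.reverse.idxOf v < l.reverse.idxOf u := by
  rw [deckKey, deckKey, Prod.Lex.toLex_lt_toLex, or_iff_left_iff_imp]
  rintro ⟨h, hlt⟩
  rw [eq_comm, List.idxOf_inj (List.mem_reverse.mpr hu)] at h
  exact absurd hlt (h ▸ lt_irrefl _)

theorem deckAfter_apply_of_mem (P Q : Perm (Fin n)) {l : List (Fin n)} {u : Fin n}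
    (hu : u ∈ l) : deckAfter P l u = deckAfter Q l u := by
  ext
  rw [← Perm.card_filter_apply_lt (deckAfter P l), ← Perm.card_filter_apply_lt (deckAfter Q l)]
  simp only [deckAfter_lt_deckAfter_iff, deckKey_lt_deckKey_iff_of_mem _ hu]

theorem deckAfter_deckAfter (P : Perm (Fin n)) (l : List (Fin n)) :
    deckAfter (deckAfter P l) l = deckAfter P l := by
  refine Perm.ext_of_lt_iff fun u v => ?_
  have h := deckAfter_lt_deckAfter_iff P l
  simp only [deckKey, Prod.Lex.toLex_lt_toLex] at h
  rw [deckAfter_lt_deckAfter_iff, deckKey, deckKey, Prod.Lex.toLex_lt_toLex]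
  refine ⟨fun huv => huv.elim (fun hlt => (h u v).2 (.inl hlt)) And.right, fun huv => ?_⟩
  rcases lt_trichotomy (l.reverse.idxOf u) (l.reverse.idxOf v) with hlt | heq | hgt
  · exact .inl hlt
  · exact .inr ⟨heq, huv⟩
  · exact absurd ((h v u).2 (.inl hgt)) huv.asymm

theorem deckAfter_map (P g : Perm (Fin n)) (l : List (Fin n)) :
    deckAfter P (l.map g) = deckAfter (P * g) l * g⁻¹ := by
  induction l generalizing P with
  | nil => simp
  | cons c l ih => simp only [List.map_cons, deckAfter_cons, ih]; rfl

/- Starting from the deck `P`, `t i` is the position of the card moved to the top at step `i`;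
`topCards P t` lists these cards. -/
def topCards (P : Perm (Fin n)) : {d : ℕ} → (Fin d → Fin n) ≃ (Fin d → Fin n)
  | 0 => Equiv.refl _
  | _ + 1 => (Fin.consEquiv fun _ => Fin n).symm.trans
      ((Equiv.prodShear P.symm fun t => topCards (Fin.cycleRange t * P)).trans
        (Fin.consEquiv fun _ => Fin n))

theorem deckAfter_ofFn_topCards (P : Perm (Fin n)) {d : ℕ} (t : Fin d → Fin n) :
    deckAfter P (List.ofFn (topCards P t)) =
      (List.ofFn fun i => (Fin.cycleRange (t i))⁻¹).prod⁻¹ * P := by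
  induction d generalizing P with
  | zero => simp
  | succ d ih =>
    have : topCards P t =
        Fin.cons (P.symm (t 0)) (topCards (Fin.cycleRange (t 0) * P) (Fin.tail t)) := rfl
    rw [this, List.ofFn_cons, deckAfter_cons, moveToTop, Equiv.apply_symm_apply, ih,
      List.ofFn_succ]
    simp [Fin.tail, mul_assoc]

end Deck

section Canonical

variable {n d : ℕ}

theorem List.ofFn_perm_smul (g : Equiv.Perm (Fin n)) (c : Fin d → Fin n) :
    List.ofFn (g • c) = (List.ofFn c).map g := by
  rw [List.map_ofFn]; rfl

theorem exists_deckAfter_ofFn_smul_eq_one (c : Fin d → Fin n) :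
    ∃ g : Perm (Fin n), deckAfter 1 (List.ofFn (g • c)) = 1 :=
  ⟨deckAfter 1 (List.ofFn c), by
    rw [List.ofFn_perm_smul, deckAfter_map, one_mul, deckAfter_deckAfter, mul_inv_cancel]⟩

theorem smul_eq_self_of_deckAfter_ofFn_eq_one {c : Fin d → Fin n} {g : Perm (Fin n)}
    (hc : deckAfter 1 (List.ofFn c) = 1) (hgc : deckAfter 1 (List.ofFn (g • c)) = 1) :
    g • c = c := by
  rw [List.ofFn_perm_smul, deckAfter_map, one_mul, mul_inv_eq_one] at hgc
  funext j
  calc g (c j) = deckAfter g (List.ofFn c) (c j) := by rw [hgc]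
    _ = deckAfter 1 (List.ofFn c) (c j) := deckAfter_apply_of_mem _ _ (List.mem_ofFn.mpr ⟨j, rfl⟩)
    _ = c j := by rw [hc]; rfl

noncomputable def deckFixedEquivOrbitRelQuotient (n d : ℕ) :
    {c : Fin d → Fin n // deckAfter 1 (List.ofFn c) = 1} ≃
      orbitRel.Quotient (Perm (Fin n)) (Fin d → Fin n) :=
  MulAction.subtypeEquivOrbitRelQuotient _ exists_deckAfter_ofFn_smul_eq_one
    fun _ _ => smul_eq_self_of_deckAfter_ofFn_eq_one

def topCardsEquiv (n d : ℕ) :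
    {t : Fin d → Fin n // (List.ofFn fun i => (Fin.cycleRange (t i))⁻¹).prod = 1} ≃
      {c : Fin d → Fin n // deckAfter 1 (List.ofFn c) = 1} :=
  (topCards 1).subtypeEquiv fun t => by rw [deckAfter_ofFn_topCards, mul_one, inv_eq_one]

end Canonical

/-- **Invariants of the permutation module count words in a Cayley graph of `S_n`.**
For `n ≥ 2` and `d ≥ 0`, the dimension of the space of `S_n`-invariant tensors in
`(ℂ^n)^{⊗d}` (permutation action) equals the number of words of length `d` over
`{e} ∪ C_n` which reduce to the identity permutation. -/
theorem dim_perm_invariants_eq_wordCount (n : ℕ) (hn : 2 ≤ n) (d : ℕ) :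
    invariantDim (permRep n) d =
      Nat.card {w : Fin d → {x // x ∈ insert (1 : Equiv.Perm (Fin n)) (Cn n)} //
        (List.ofFn fun i => ((w i : Equiv.Perm (Fin n)))).prod = 1} := by
  have : NeZero n := ⟨by omega⟩
  rw [invariantDim_permRep_eq_card_orbits]
  exact Nat.card_congr <| (deckFixedEquivOrbitRelQuotient n d).symm.trans <|
    (topCardsEquiv n d).symm.trans <|
      (Equiv.arrowCongr (Equiv.refl _) (equivInsertOneCn n)).subtypeEquiv fun _ => Iff.rfl
end

section
/- Let m = 2k+1 be odd with k ≥ 1 and let D_m = ⟨s, r | s² = r^m = srsr = e⟩. In ℝ[D_m] set y_i = r^{1−i}s + r^i for 1 ≤ i ≤ k (exponents taken modulo m). Then: (i) the 2k+2 elements e, rs, y_1, …, y_k, y_1·rs, …, y_k·rs are linearly independent and their ℝ-linear span Q is closed under the multiplication of ℝ[D_m]; (ii) the ℝ-linear map θ : Q → ClassFun_ℝ(D_m) determined by θ(e) = id, θ(rs) = ε, and θ(y_i) = θ(y_i·rs) = χ_i for 1 ≤ i ≤ k is multiplicative (θ(fg) = θ(f)·θ(g) pointwise for all f, g ∈ Q)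 and its image is the ℝ-linear span of the irreducible characters of D_m. -/
open DihedralGroup

/-- The group-algebra element corresponding to `g ∈ D_m`. -/
noncomputable def sg {m : ℕ} (g : DihedralGroup m) : MonoidAlgebra ℝ (DihedralGroup m) :=
  MonoidAlgebra.single g 1

/-- `y_i = r^{1-i} s + r^i` in `ℝ[D_m]`; in Mathlib's presentation of the dihedral group
(`s = sr 0`, `r = r 1`) one has `r^{1-i} s = sr (i - 1)`. -/
noncomputable def yElt (m : ℕ) (i : ℕ) : MonoidAlgebra ℝ (DihedralGroup m) :=
  sg (sr ((i : ZMod m) - 1)) + sg (r (i : ZMod m))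

/-- `rs = r · s = sr (-1)` in `ℝ[D_m]`. -/
noncomputable def rsElt (m : ℕ) : MonoidAlgebra ℝ (DihedralGroup m) := sg (sr (-1))

/-- The trivial character `id` of `D_m`. -/
noncomputable def chiId (m : ℕ) : DihedralGroup m → ℝ := fun _ => 1

/-- The character `ε` of `D_m`: `ε(rᵃ) = 1`, `ε(rᵃs) = -1`. -/
noncomputable def chiEps (m : ℕ) : DihedralGroup m → ℝ
  | .r _ => 1
  | .sr _ => -1

/-- The character `γ` of `D_m` (`m` even): `γ(rᵃ) = (-1)ᵃ`, `γ(rᵃs) = (-1)ᵃ`. -/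
noncomputable def chiGamma (m : ℕ) : DihedralGroup m → ℝ
  | .r a => (-1 : ℝ) ^ a.val
  | .sr a => (-1 : ℝ) ^ a.val

/-- The character `γε` of `D_m` (`m` even): `γε(rᵃ) = (-1)ᵃ`, `γε(rᵃs) = (-1)^{a+1}`. -/
noncomputable def chiGammaEps (m : ℕ) : DihedralGroup m → ℝ
  | .r a => (-1 : ℝ) ^ a.val
  | .sr a => (-1 : ℝ) ^ (a.val + 1)

/-- The two-dimensional character `χ_j` of `D_m`: `χ_j(rᵃ) = 2cos(2πja/m)`,
`χ_j(rᵃs) = 0`. -/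
noncomputable def chiJ (m : ℕ) (j : ℕ) : DihedralGroup m → ℝ
  | .r a => 2 * Real.cos (2 * Real.pi * j * a.val / m)
  | .sr _ => 0

/-- The family `e, rs, y_1, …, y_k, y_1·rs, …, y_k·rs` in `ℝ[D_m]` for `m = 2k+1` odd. -/
noncomputable def famOdd (k : ℕ) :
    (Fin 2 ⊕ (Fin k ⊕ Fin k)) → MonoidAlgebra ℝ (DihedralGroup (2 * k + 1)) :=
  Sum.elim
    ![sg 1, rsElt (2 * k + 1)]
    (Sum.elim (fun i => yElt (2 * k + 1) (i.val + 1))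
      (fun i => yElt (2 * k + 1) (i.val + 1) * rsElt (2 * k + 1)))


/-! Let the index of `y` range over all residues `a ∈ ℤ/m`, so that `y_0 = rs + e` and
`y_i·rs = y_{-i}`. In `ℝ[D_m]` one has `y_a y_b = y_{a+b} + y_{b-a}`, `y_a·rs = y_{-a}`,
`rs·y_a = y_a` and `rs·rs = e`. For `m = 2k+1` the residues `0, ±1, …, ±k` exhaust `ℤ/m`,
so `Q` is the span of `e`, `rs` and all the `y_a`, which is closed under products by these
rules. The characters obey the same rules with `χ_0 = id + ε` (for `χ_a χ_b` this is the
product formula for cosines), so the linear map on `ℝ[D_m]` sending `e ↦ id`, `rs ↦ ε`,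
`r^a ↦ χ_a` for `a ≠ 0` and every other reflection to `0` sends `y_a ↦ χ_a` and is
multiplicative on `Q`; `θ` is its restriction to `Q`. Linear independence holds because the
coefficients of the family at `e, rs, r^{±1}, …, r^{±k}` form an identity matrix. -/

open Real

lemma Submodule.mul_mem_span_of_mul_mem_span {R A : Type*} [CommSemiring R] [Semiring A]
    [Algebra R A] {S : Set A} (hS : ∀ x ∈ S, ∀ y ∈ S, x * y ∈ span R S) {f g : A}
    (hf : f ∈ span R S) (hg : g ∈ span R S) : f * g ∈ span R S := by
  have hprod := Submodule.mul_mem_mul hf hg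
  rw [Submodule.span_mul_span] at hprod
  exact Submodule.span_le.mpr (Set.mul_subset_iff.mpr hS) hprod

lemma LinearMap.map_mul_of_mem_span {R A B : Type*} [CommSemiring R]
    [NonUnitalNonAssocSemiring A] [Module R A] [IsScalarTower R A A] [SMulCommClass R A A]
    [NonUnitalNonAssocSemiring B] [Module R B] [IsScalarTower R B B] [SMulCommClass R B B]
    (T : A →ₗ[R] B) {S : Set A} (hS : ∀ x ∈ S, ∀ y ∈ S, T (x * y) = T x * T y) {f g : A}
    (hf : f ∈ Submodule.span R S) (hg : g ∈ Submodule.span R S) : T (f * g) = T f * T g := by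
  induction hf, hg using Submodule.span_induction₂ with
  | mem_mem x y hx hy => exact hS x hx y hy
  | zero_left y hy => simp
  | zero_right x hx => simp
  | add_left x y z hx hy hz h1 h2 => rw [add_mul, map_add, map_add, add_mul, h1, h2]
  | add_right x y z hx hy hz h1 h2 => rw [mul_add, map_add, map_add, mul_add, h1, h2]
  | smul_left c x y hx hy h => rw [smul_mul_assoc, map_smul, map_smul, smul_mul_assoc, h]
  | smul_right c x y hx hy h => rw [mul_smul_comm, map_smul, map_smul, mul_smul_comm, h]

lemma LinearMap.range_eq_span_range_of_span {R M N ι : Type*} [Semiring R] [AddCommMonoid M]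
    [Module R M] [AddCommMonoid N] [Module R N] {v : ι → M}
    (θ : Submodule.span R (Set.range v) →ₗ[R] N) :
    range θ =
      Submodule.span R (Set.range fun i => θ ⟨v i, Submodule.subset_span ⟨i, rfl⟩⟩) := by
  rw [range_eq_map, ← (Submodule.span_range_subtype_eq_top_iff _ _).mpr rfl, Submodule.map_span,
    ← Set.range_comp]
  rfl

namespace DihedralGroup

section GroupAlgebra

variable {m : ℕ}

noncomputable def yRes (m : ℕ) (a : ZMod m) : MonoidAlgebra ℝ (DihedralGroup m) :=
  sg (sr (a - 1)) + sg (r a)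

lemma sg_one : sg (1 : DihedralGroup m) = 1 := rfl

lemma sg_mul_sg (g h : DihedralGroup m) : sg g * sg h = sg (g * h) := by
  simp [sg, MonoidAlgebra.single_mul_single]

lemma coeff_sg (g h : DihedralGroup m) : (sg g).coeff h = if g = h then 1 else 0 :=
  Finsupp.single_apply

lemma coeff_yRes_r (a b : ZMod m) : (yRes m a).coeff (r b) = if a = b then 1 else 0 := by
  simp [yRes, coeff_sg]

lemma coeff_yRes_sr_neg_one (a : ZMod m) :
    (yRes m a).coeff (sr (-1)) = if a = 0 then 1 else 0 := by
  simp [yRes, coeff_sg, sub_eq_neg_self]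

lemma yRes_zero : yRes m 0 = rsElt m + sg 1 := by
  rw [yRes, rsElt, zero_sub, one_def]

lemma yRes_mul_yRes (a b : ZMod m) : yRes m a * yRes m b = yRes m (a + b) + yRes m (b - a) := by
  simp only [yRes, add_mul, mul_add, sg_mul_sg, sr_mul_sr, sr_mul_r, r_mul_sr, r_mul_r]
  rw [show b - 1 - (a - 1) = b - a by ring, show a - 1 + b = a + b - 1 by ring,
    show b - 1 - a = b - a - 1 by ring]
  abel

lemma yRes_mul_rsElt (a : ZMod m) : yRes m a * rsElt m = yRes m (-a) := by
  simp only [yRes, rsElt, add_mul, sg_mul_sg, sr_mul_sr, r_mul_sr]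
  rw [show -1 - (a - 1) = -a by ring, show -1 - a = -a - 1 by ring, add_comm]

lemma rsElt_mul_yRes (a : ZMod m) : rsElt m * yRes m a = yRes m a := by
  simp only [yRes, rsElt, mul_add, sg_mul_sg, sr_mul_sr, sr_mul_r]
  rw [show a - 1 - -1 = a by ring, show -1 + a = a - 1 by ring, add_comm]

lemma rsElt_mul_rsElt : rsElt m * rsElt m = sg 1 := by
  rw [rsElt, sg_mul_sg, sr_mul_sr, sub_self, one_def]

end GroupAlgebra

section Characters

variable {m : ℕ}

lemma chiId_mul (f : DihedralGroup m → ℝ) : chiId m * f = f := by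
  funext g; simp [chiId]

lemma mul_chiId (f : DihedralGroup m → ℝ) : f * chiId m = f := by
  rw [mul_comm, chiId_mul]

lemma chiEps_mul_chiEps : chiEps m * chiEps m = chiId m := by
  funext g; cases g <;> simp [chiEps, chiId]

lemma chiEps_mul_chiJ (j : ℕ) : chiEps m * chiJ m j = chiJ m j := by
  funext g; cases g <;> simp [chiEps, chiJ]

lemma chiJ_mul_chiEps (j : ℕ) : chiJ m j * chiEps m = chiJ m j := by
  rw [mul_comm, chiEps_mul_chiJ]

lemma chiEps_add_chiId : chiEps m + chiId m = chiJ m 0 := by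
  funext g; cases g <;> norm_num [chiEps, chiId, chiJ]

variable [NeZero m]

lemma intCast_val_zmod (x : ZMod m) : ((x.val : ℤ) : ZMod m) = x := by
  rw [Int.cast_natCast, ZMod.natCast_zmod_val]

lemma cos_two_pi_mul_div_eq_of_intCast_eq {x y : ℤ} (h : (x : ZMod m) = y) :
    cos (2 * π * x / m) = cos (2 * π * y / m) := by
  obtain ⟨t, ht⟩ := (ZMod.intCast_eq_intCast_iff_dvd_sub x y m).mp h
  have hm : (m : ℝ) ≠ 0 := Nat.cast_ne_zero.mpr (NeZero.ne m)
  have hy : 2 * π * y / m = 2 * π * x / m + t * (2 * π) := by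
    rw [show (y : ℝ) = x + m * t by exact_mod_cast (sub_eq_iff_eq_add'.mp ht)]
    field_simp
  rw [hy, cos_add_int_mul_two_pi]

lemma chiJ_val_r (a c : ZMod m) {n : ℤ} (hn : (n : ZMod m) = a) :
    chiJ m a.val (r c) = 2 * cos (2 * π * (n * c.val : ℤ) / m) := by
  rw [chiJ, ← cos_two_pi_mul_div_eq_of_intCast_eq (x := a.val * c.val)]
  · push_cast; ring_nf
  · push_cast; rw [ZMod.natCast_zmod_val, hn]

lemma chiJ_val_neg (a : ZMod m) : chiJ m (-a).val = chiJ m a.val := by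
  funext g
  cases g with
  | sr c => rfl
  | r c =>
    rw [chiJ_val_r (-a) c (n := -a.val) (by rw [Int.cast_neg, intCast_val_zmod]),
      chiJ_val_r a c (intCast_val_zmod a)]
    push_cast
    rw [neg_mul, mul_neg, neg_div, cos_neg]

lemma chiJ_val_mul (a b : ZMod m) :
    chiJ m a.val * chiJ m b.val = chiJ m (a + b).val + chiJ m (b - a).val := by
  funext g
  cases g with
  | sr c => simp [chiJ]
  | r c =>
    simp only [Pi.mul_apply, Pi.add_apply]
    rw [chiJ_val_r a c (intCast_val_zmod a), chiJ_val_r b c (intCast_val_zmod b),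
      chiJ_val_r (a + b) c (n := a.val + b.val)
        (by rw [Int.cast_add, intCast_val_zmod, intCast_val_zmod]),
      chiJ_val_r (b - a) c (n := b.val - a.val)
        (by rw [Int.cast_sub, intCast_val_zmod, intCast_val_zmod])]
    push_cast
    rw [show 2 * π * ((a.val + b.val) * c.val) / m
          = 2 * π * (a.val * c.val) / m + 2 * π * (b.val * c.val) / m by ring,
      show 2 * π * ((b.val - a.val) * c.val) / m
          = 2 * π * (b.val * c.val) / m - 2 * π * (a.val * c.val) / m by ring,
      cos_add, cos_sub]
    ring

end Characters

section CharacterMap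

variable {m : ℕ}

noncomputable def charOfElem (m : ℕ) : DihedralGroup m → DihedralGroup m → ℝ
  | .r a => if a = 0 then chiId m else chiJ m a.val
  | .sr a => if a = -1 then chiEps m else 0

noncomputable def charMap (m : ℕ) :
    MonoidAlgebra ℝ (DihedralGroup m) →ₗ[ℝ] (DihedralGroup m → ℝ) :=
  Finsupp.linearCombination ℝ (charOfElem m) ∘ₗ
    (MonoidAlgebra.coeffLinearEquiv ℝ).toLinearMap

lemma charMap_sg (g : DihedralGroup m) : charMap m (sg g) = charOfElem m g :=
  (Finsupp.linearCombination_single ℝ 1 g).trans (one_smul ℝ _)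

lemma charMap_one : charMap m (sg 1) = chiId m := by
  rw [one_def, charMap_sg, charOfElem, if_pos rfl]

lemma charMap_rsElt : charMap m (rsElt m) = chiEps m := by
  simp [rsElt, charMap_sg, charOfElem]

lemma charMap_yRes (a : ZMod m) : charMap m (yRes m a) = chiJ m a.val := by
  rw [yRes, map_add, charMap_sg, charMap_sg]
  rcases eq_or_ne a 0 with rfl | ha
  · simp [charOfElem, chiEps_add_chiId]
  · simp [charOfElem, ha]

def qGenerators (m : ℕ) : Set (MonoidAlgebra ℝ (DihedralGroup m)) :=
  {sg 1, rsElt m} ∪ Set.range (yRes m)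

lemma mul_mem_span_qGenerators {x y : MonoidAlgebra ℝ (DihedralGroup m)}
    (hx : x ∈ qGenerators m) (hy : y ∈ qGenerators m) :
    x * y ∈ Submodule.span ℝ (qGenerators m) := by
  have hgen : qGenerators m ⊆ Submodule.span ℝ (qGenerators m) := Submodule.subset_span
  rcases hx with (rfl | rfl) | ⟨a, rfl⟩
  · rw [sg_one, one_mul]; exact hgen hy
  all_goals rcases hy with (rfl | rfl) | ⟨b, rfl⟩
  · rw [sg_one, mul_one]; exact hgen (.inl (.inr rfl))
  · rw [rsElt_mul_rsElt]; exact hgen (.inl (.inl rfl))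
  · rw [rsElt_mul_yRes]; exact hgen (.inr ⟨b, rfl⟩)
  · rw [sg_one, mul_one]; exact hgen (.inr ⟨a, rfl⟩)
  · rw [yRes_mul_rsElt]; exact hgen (.inr ⟨-a, rfl⟩)
  · rw [yRes_mul_yRes]; exact add_mem (hgen (.inr ⟨a + b, rfl⟩)) (hgen (.inr ⟨b - a, rfl⟩))

lemma charMap_mul_of_mem_qGenerators [NeZero m] {x y : MonoidAlgebra ℝ (DihedralGroup m)}
    (hx : x ∈ qGenerators m) (hy : y ∈ qGenerators m) :
    charMap m (x * y) = charMap m x * charMap m y := by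
  rcases hx with (rfl | rfl) | ⟨a, rfl⟩
  · rw [charMap_one, chiId_mul, sg_one, one_mul]
  all_goals rcases hy with (rfl | rfl) | ⟨b, rfl⟩
  · rw [charMap_one, mul_chiId, sg_one, mul_one]
  · rw [rsElt_mul_rsElt, charMap_one, charMap_rsElt, chiEps_mul_chiEps]
  · rw [rsElt_mul_yRes, charMap_rsElt, charMap_yRes, chiEps_mul_chiJ]
  · rw [charMap_one, mul_chiId, sg_one, mul_one]
  · rw [yRes_mul_rsElt, charMap_yRes, charMap_rsElt, charMap_yRes, chiJ_mul_chiEps,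
      chiJ_val_neg]
  · rw [yRes_mul_yRes, map_add, charMap_yRes, charMap_yRes, charMap_yRes, charMap_yRes,
      chiJ_val_mul]

end CharacterMap

section OddFamily

variable {k : ℕ}

lemma famOdd_inr_inl (i : Fin k) :
    famOdd k (.inr (.inl i)) = yRes (2 * k + 1) ((i.val + 1 : ℕ) : ZMod (2 * k + 1)) := rfl

lemma famOdd_inr_inr (i : Fin k) :
    famOdd k (.inr (.inr i)) = yRes (2 * k + 1) (-((i.val + 1 : ℕ) : ZMod (2 * k + 1))) :=
  yRes_mul_rsElt _

lemma val_natCast_succ (i : Fin k) : ((i.val + 1 : ℕ) : ZMod (2 * k + 1)).val = i.val + 1 :=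
  ZMod.val_cast_of_lt (by omega)

lemma val_neg_natCast_succ (i : Fin k) :
    (-((i.val + 1 : ℕ) : ZMod (2 * k + 1))).val = 2 * k - i.val := by
  rw [ZMod.neg_val, if_neg, val_natCast_succ]
  · omega
  · rw [← ZMod.val_eq_zero, val_natCast_succ]; omega

lemma eq_zero_or_exists_eq_natCast_succ_or_eq_neg (a : ZMod (2 * k + 1)) :
    a = 0 ∨ ∃ i : Fin k, a = ((i.val + 1 : ℕ) : ZMod (2 * k + 1)) ∨
      a = -((i.val + 1 : ℕ) : ZMod (2 * k + 1)) := by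
  have ha := ZMod.val_lt a
  rcases Nat.eq_zero_or_pos a.val with h0 | hpos
  · exact .inl ((ZMod.val_eq_zero a).mp h0)
  refine .inr ?_
  rcases le_or_gt a.val k with hle | hgt
  · refine ⟨⟨a.val - 1, by omega⟩, .inl (ZMod.val_injective _ ?_)⟩
    rw [val_natCast_succ, Fin.val_mk]; omega
  · refine ⟨⟨2 * k - a.val, by omega⟩, .inr (ZMod.val_injective _ ?_)⟩
    rw [val_neg_natCast_succ, Fin.val_mk]; omega

lemma span_range_famOdd :
    Submodule.span ℝ (Set.range (famOdd k)) = Submodule.span ℝ (qGenerators (2 * k + 1)) := by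
  apply le_antisymm <;> rw [Submodule.span_le]
  · rintro _ ⟨(j | i | i), rfl⟩
    · fin_cases j
      · exact Submodule.subset_span (.inl (.inl rfl))
      · exact Submodule.subset_span (.inl (.inr rfl))
    · rw [famOdd_inr_inl]; exact Submodule.subset_span (.inr ⟨_, rfl⟩)
    · rw [famOdd_inr_inr]; exact Submodule.subset_span (.inr ⟨_, rfl⟩)
  · have hfam (j) : famOdd k j ∈ Submodule.span ℝ (Set.range (famOdd k)) :=
      Submodule.subset_span ⟨j, rfl⟩
    rintro _ ((rfl | rfl) | ⟨a, rfl⟩)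
    · exact hfam (.inl 0)
    · exact hfam (.inl 1)
    rcases eq_zero_or_exists_eq_natCast_succ_or_eq_neg a with rfl | ⟨i, rfl | rfl⟩
    · rw [yRes_zero]; exact add_mem (hfam (.inl 1)) (hfam (.inl 0))
    · exact famOdd_inr_inl i ▸ hfam _
    · exact famOdd_inr_inr i ▸ hfam _

noncomputable def famOddDualPoint (k : ℕ) :
    Fin 2 ⊕ (Fin k ⊕ Fin k) → DihedralGroup (2 * k + 1) :=
  Sum.elim ![r 0, sr (-1)]
    (Sum.elim (fun i => r ((i.val + 1 : ℕ) : ZMod (2 * k + 1)))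
      (fun i => r (-((i.val + 1 : ℕ) : ZMod (2 * k + 1)))))

lemma coeff_famOdd_famOddDualPoint (j i : Fin 2 ⊕ (Fin k ⊕ Fin k)) :
    (famOdd k j).coeff (famOddDualPoint k i) = if j = i then 1 else 0 := by
  have famOdd_inl_zero : famOdd k (.inl 0) = sg (r 0) := rfl
  have famOdd_inl_one : famOdd k (.inl 1) = sg (sr (-1)) := rfl
  rcases j with j | j | j <;> rcases i with i | i | i <;> (try fin_cases j) <;> (try fin_cases i)
  all_goals
    simp only [famOdd_inl_zero, famOdd_inl_one, famOdd_inr_inl, famOdd_inr_inr, famOddDualPoint,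
      Sum.elim_inl, Sum.elim_inr, Fin.zero_eta, Fin.mk_one, Matrix.cons_val_zero,
      Matrix.cons_val_one, coeff_sg, coeff_yRes_r, coeff_yRes_sr_neg_one, r.injEq, reduceCtorEq,
      Sum.inl.injEq, Sum.inr.injEq, ← (ZMod.val_injective _).eq_iff, val_natCast_succ,
      val_neg_natCast_succ, ZMod.val_zero]
  all_goals split_ifs <;> first | rfl | (exfalso; omega)

lemma linearIndependent_famOdd : LinearIndependent ℝ (famOdd k) := by
  let coeffs :
      MonoidAlgebra ℝ (DihedralGroup (2 * k + 1)) →ₗ[ℝ] (Fin 2 ⊕ (Fin k ⊕ Fin k) → ℝ) :=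
    LinearMap.pi fun i => Finsupp.lapply (famOddDualPoint k i) ∘ₗ
      (MonoidAlgebra.coeffLinearEquiv ℝ).toLinearMap
  have hdual : coeffs ∘ famOdd k = Pi.basisFun ℝ _ := by
    funext j i
    simp [coeffs, coeff_famOdd_famOddDualPoint, Pi.single_apply, eq_comm]
  exact LinearIndependent.of_comp coeffs (hdual ▸ (Pi.basisFun ℝ _).linearIndependent)

noncomputable def famOddChar (k : ℕ) :
    Fin 2 ⊕ (Fin k ⊕ Fin k) → DihedralGroup (2 * k + 1) → ℝ :=
  Sum.elim ![chiId (2 * k + 1), chiEps (2 * k + 1)]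
    (Sum.elim (fun i => chiJ (2 * k + 1) (i.val + 1)) (fun i => chiJ (2 * k + 1) (i.val + 1)))

lemma charMap_famOdd (j : Fin 2 ⊕ (Fin k ⊕ Fin k)) :
    charMap _ (famOdd k j) = famOddChar k j := by
  rcases j with j | i | i
  · fin_cases j
    · exact charMap_one
    · exact charMap_rsElt
  · rw [famOdd_inr_inl, charMap_yRes, val_natCast_succ]; rfl
  · rw [famOdd_inr_inr, charMap_yRes, chiJ_val_neg, val_natCast_succ]; rfl

lemma range_famOddChar : Set.range (famOddChar k) = {chiId (2 * k + 1), chiEps (2 * k + 1)} ∪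
    Set.range fun j : Fin k => chiJ (2 * k + 1) (j.val + 1) := by
  rw [famOddChar, Set.Sum.elim_range, Set.Sum.elim_range, Set.union_self, Matrix.range_cons,
    Matrix.range_cons, Matrix.range_empty, Set.union_empty, Set.singleton_union]

end OddFamily

end DihedralGroup

theorem dihedral_odd_subalgebra_and_character_morphism_general (k : ℕ) :
    LinearIndependent ℝ (famOdd k) ∧
    (∀ f g : MonoidAlgebra ℝ (DihedralGroup (2 * k + 1)),
      f ∈ Submodule.span ℝ (Set.range (famOdd k)) →
      g ∈ Submodule.span ℝ (Set.range (famOdd k)) →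
      f * g ∈ Submodule.span ℝ (Set.range (famOdd k))) ∧
    (∀ θ : (Submodule.span ℝ (Set.range (famOdd k))) →ₗ[ℝ] (DihedralGroup (2 * k + 1) → ℝ),
      θ ⟨famOdd k (Sum.inl 0), Submodule.subset_span (Set.mem_range_self _)⟩
          = chiId (2 * k + 1) →
      θ ⟨famOdd k (Sum.inl 1), Submodule.subset_span (Set.mem_range_self _)⟩
          = chiEps (2 * k + 1) →
      (∀ i : Fin k,
        θ ⟨famOdd k (Sum.inr (Sum.inl i)), Submodule.subset_span (Set.mem_range_self _)⟩
          = chiJ (2 * k + 1) (i.val + 1)) →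
      (∀ i : Fin k,
        θ ⟨famOdd k (Sum.inr (Sum.inr i)), Submodule.subset_span (Set.mem_range_self _)⟩
          = chiJ (2 * k + 1) (i.val + 1)) →
      ((∀ (f g : MonoidAlgebra ℝ (DihedralGroup (2 * k + 1)))
          (hf : f ∈ Submodule.span ℝ (Set.range (famOdd k)))
          (hg : g ∈ Submodule.span ℝ (Set.range (famOdd k)))
          (hfg : f * g ∈ Submodule.span ℝ (Set.range (famOdd k))),
          θ ⟨f * g, hfg⟩ = θ ⟨f, hf⟩ * θ ⟨g, hg⟩) ∧
        LinearMap.range θ = Submodule.span ℝ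
          ({chiId (2 * k + 1), chiEps (2 * k + 1)} ∪
            Set.range fun j : Fin k => chiJ (2 * k + 1) (j.val + 1)))) := by
  have hspan := span_range_famOdd (k := k)
  refine ⟨linearIndependent_famOdd, fun f g hf hg => ?_, fun θ h0 h1 h2 h3 => ?_⟩
  · rw [hspan] at hf hg ⊢
    exact Submodule.mul_mem_span_of_mul_mem_span (fun x hx y hy => mul_mem_span_qGenerators hx hy)
      hf hg
  have hθ (j) :
      θ ⟨famOdd k j, Submodule.subset_span (Set.mem_range_self j)⟩ = famOddChar k j := by
    rcases j with j | i | i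
    · fin_cases j
      exacts [h0, h1]
    · exact h2 i
    · exact h3 i
  have hθ_eq : θ = charMap _ ∘ₗ Submodule.subtype _ :=
    LinearMap.ext_on_range ((Submodule.span_range_subtype_eq_top_iff _ _).mpr rfl)
      fun j => (hθ j).trans (charMap_famOdd j).symm
  refine ⟨fun f g hf hg hfg => ?_, ?_⟩
  · rw [hspan] at hf hg
    rw [hθ_eq]
    exact (charMap _).map_mul_of_mem_span (fun x hx y hy => charMap_mul_of_mem_qGenerators hx hy)
      hf hg
  · rw [LinearMap.range_eq_span_range_of_span, funext hθ, range_famOddChar]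

/-- **The subalgebra `Q` of `ℝ[D_m]` and the morphism onto the character algebra
(`m = 2k+1` odd).**  (i) The `2k+2` elements `e, rs, y_i, y_i·rs` (`1 ≤ i ≤ k`) are
linearly independent and their span `Q` is closed under multiplication.  (ii) Any linear
map `θ : Q → (D_m → ℝ)` with `θ(e) = id`, `θ(rs) = ε` and `θ(y_i) = θ(y_i·rs) = χ_i` is
multiplicative on `Q`, and its image is the `ℝ`-span of the irreducible characters. -/
theorem dihedral_odd_subalgebra_and_character_morphism (k : ℕ) (hk : 1 ≤ k) :
    LinearIndependent ℝ (famOdd k) ∧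
    (∀ f g : MonoidAlgebra ℝ (DihedralGroup (2 * k + 1)),
      f ∈ Submodule.span ℝ (Set.range (famOdd k)) →
      g ∈ Submodule.span ℝ (Set.range (famOdd k)) →
      f * g ∈ Submodule.span ℝ (Set.range (famOdd k))) ∧
    (∀ θ : (Submodule.span ℝ (Set.range (famOdd k))) →ₗ[ℝ] (DihedralGroup (2 * k + 1) → ℝ),
      θ ⟨famOdd k (Sum.inl 0), Submodule.subset_span (Set.mem_range_self _)⟩
          = chiId (2 * k + 1) →
      θ ⟨famOdd k (Sum.inl 1), Submodule.subset_span (Set.mem_range_self _)⟩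
          = chiEps (2 * k + 1) →
      (∀ i : Fin k,
        θ ⟨famOdd k (Sum.inr (Sum.inl i)), Submodule.subset_span (Set.mem_range_self _)⟩
          = chiJ (2 * k + 1) (i.val + 1)) →
      (∀ i : Fin k,
        θ ⟨famOdd k (Sum.inr (Sum.inr i)), Submodule.subset_span (Set.mem_range_self _)⟩
          = chiJ (2 * k + 1) (i.val + 1)) →
      ((∀ (f g : MonoidAlgebra ℝ (DihedralGroup (2 * k + 1)))
          (hf : f ∈ Submodule.span ℝ (Set.range (famOdd k)))
          (hg : g ∈ Submodule.span ℝ (Set.range (famOdd k)))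
          (hfg : f * g ∈ Submodule.span ℝ (Set.range (famOdd k))),
          θ ⟨f * g, hfg⟩ = θ ⟨f, hf⟩ * θ ⟨g, hg⟩) ∧
        LinearMap.range θ = Submodule.span ℝ
          ({chiId (2 * k + 1), chiEps (2 * k + 1)} ∪
            Set.range fun j : Fin k => chiJ (2 * k + 1) (j.val + 1)))) :=
  dihedral_odd_subalgebra_and_character_morphism_general k
end

section
/- Let m ≥ 3. For d ≥ 0 let a_d be the number of words of length d over {r, s} in D_m that reduce to the identity e, and for d ≥ 1 let b_d be the number of words of length d over {r, s} that reduce to e and do not cross the identity, with b_0 = 0. Then in ℚ⟦q⟧ one has (Σ_{d≥0} a_d q^d)·(1 − Σ_{d≥1} b_d q^d) = 1. (This identity expresses that b_d is the number of free generators of degree d of the free algebra of invariants T(V¹)^{D_m}, where V¹ is the geometric module.) -/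
/-!
First-return decomposition: a nonempty word reducing to `e` splits uniquely as its shortest
nonempty prefix reducing to `e`, which does not cross the identity, followed by an arbitrary word
reducing to `e`. Hence `a (n + 1) = ∑_{i + j = n} b (i + 1) * a j`, that is `A = 1 + B * A` for the
generating series, and `A * (1 - B) = 1`.
-/

open Finset PowerSeries

theorem PowerSeries.mk_mul_one_sub_mk_eq_one {R : Type*} [CommRing R] {a b : ℕ → R}
    (ha0 : a 0 = 1) (hb0 : b 0 = 0)
    (ha : ∀ n, a (n + 1) = ∑ p ∈ antidiagonal n, b (p.1 + 1) * a p.2) :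
    mk a * (1 - mk b) = 1 := by
  have h : mk a = 1 + mk b * mk a := by
    ext (_ | n)
    · simp [ha0, hb0]
    · rw [map_add, coeff_mul, Nat.sum_antidiagonal_succ]
      simp [ha, hb0]
  linear_combination h

section FirstReturn

variable {M α : Type*} [Monoid M] (c : α → M)

def returnWords (n : ℕ) : Set (List α) := {l | l.length = n ∧ (l.map c).prod = 1}

def firstReturnWords (n : ℕ) : Set (List α) :=
  {l | l.length = n ∧ (l.map c).prod = 1 ∧ ∀ j, 0 < j → j < n → ((l.map c).take j).prod ≠ 1}

theorem returnWords_zero : returnWords c 0 = {[]} := by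
  ext l
  constructor
  · exact fun hl => List.length_eq_zero_iff.mp hl.1
  · rintro rfl; exact ⟨rfl, List.prod_nil⟩

theorem finite_returnWords [Finite α] (n : ℕ) : (returnWords c n).Finite :=
  (List.finite_length_eq α n).subset fun _ hl => hl.1

instance [Finite α] (n : ℕ) : Finite (returnWords c n) := (finite_returnWords c n).to_subtype

instance [Finite α] (n : ℕ) : Finite (firstReturnWords c n) :=
  ((finite_returnWords c n).subset fun _ hl => ⟨hl.1, hl.2.1⟩).to_subtype

variable {c}

theorem append_mem_returnWords {u v : List α} {i j : ℕ} (hu : u ∈ returnWords c i)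
    (hv : v ∈ returnWords c j) : u ++ v ∈ returnWords c (i + j) := by
  simp_all [returnWords]

theorem drop_mem_returnWords {l : List α} {n k : ℕ} (hl : l ∈ returnWords c n)
    (hk : ((l.map c).take k).prod = 1) : l.drop k ∈ returnWords c (n - k) := by
  refine ⟨by simp [hl.1], ?_⟩
  rw [← hl.2, ← List.prod_take_mul_prod_drop (l.map c) k, hk, one_mul, List.map_drop]

theorem exists_take_mem_firstReturnWords {l : List α} {n : ℕ} (hl : l ∈ returnWords c (n + 1)) :
    ∃ k ≤ n, l.take (k + 1) ∈ firstReturnWords c (k + 1) := by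
  classical
  have hn : ((l.map c).take (n + 1)).prod = 1 := by
    rw [List.take_of_length_le (by simp [hl.1]), hl.2]
  have hex : ∃ k, ((l.map c).take (k + 1)).prod = 1 := ⟨n, hn⟩
  have hkn : Nat.find hex ≤ n := Nat.find_min' hex hn
  refine ⟨Nat.find hex, hkn, by simp [hl.1, hkn], by rw [List.map_take]; exact Nat.find_spec hex,
    ?_⟩
  intro j hj hjk
  rw [List.map_take, List.take_take, min_eq_left hjk.le]
  obtain ⟨i, rfl⟩ := Nat.exists_eq_add_of_lt hj
  exact Nat.find_min hex (by omega)

theorem length_eq_of_append_eq_append {u u' v v' : List α} {i i' : ℕ}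
    (hu : u ∈ firstReturnWords c (i + 1)) (hu' : u' ∈ firstReturnWords c (i' + 1))
    (h : u ++ v = u' ++ v') : i = i' := by
  wlog hii' : i ≤ i' generalizing i i' u u' v v'
  · exact (this hu' hu h.symm (by omega)).symm
  by_contra hne
  have hpre : u = u'.take (i + 1) := by
    rw [← List.take_left' hu.1, h, List.take_append_of_le_length (by rw [hu'.1]; omega)]
  refine hu'.2.2 (i + 1) (by omega) (by omega) ?_
  rw [← List.map_take, ← hpre, hu.2.1]

variable (c) in
def concatFirstReturn (n : ℕ) :
    (Σ p : antidiagonal n, firstReturnWords c (p.1.1 + 1) × returnWords c p.1.2) →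
      returnWords c (n + 1) :=
  fun x => ⟨x.2.1.1 ++ x.2.2.1, by
    simpa [add_right_comm, ← HasAntidiagonal.mem_antidiagonal.mp x.1.2]
      using append_mem_returnWords ⟨x.2.1.2.1, x.2.1.2.2.1⟩ x.2.2.2⟩

theorem concatFirstReturn_injective (n : ℕ) : (concatFirstReturn c n).Injective := by
  rintro ⟨⟨⟨i, j⟩, hij⟩, ⟨u, hu⟩, ⟨v, hv⟩⟩ ⟨⟨⟨i', j'⟩, hij'⟩, ⟨u', hu'⟩, ⟨v', hv'⟩⟩ h
  have happ : u ++ v = u' ++ v' := congrArg Subtype.val h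
  obtain rfl : i = i' := length_eq_of_append_eq_append hu hu' happ
  obtain rfl : j = j' := by rw [HasAntidiagonal.mem_antidiagonal] at hij hij'; omega
  obtain ⟨rfl, rfl⟩ := List.append_inj happ (by rw [hu.1, hu'.1])
  rfl

theorem concatFirstReturn_surjective (n : ℕ) : (concatFirstReturn c n).Surjective := by
  rintro ⟨l, hl⟩
  obtain ⟨k, hkn, hk⟩ := exists_take_mem_firstReturnWords hl
  have hdrop : l.drop (k + 1) ∈ returnWords c (n - k) := by
    have := drop_mem_returnWords hl (by rw [← List.map_take]; exact hk.2.1)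
    rwa [Nat.add_sub_add_right] at this
  exact ⟨⟨⟨(k, n - k), HasAntidiagonal.mem_antidiagonal.mpr (by omega)⟩, ⟨_, hk⟩, ⟨_, hdrop⟩⟩,
    Subtype.ext (List.take_append_drop _ _)⟩

variable (c)

theorem card_returnWords_zero : Nat.card (returnWords c 0) = 1 := by
  rw [returnWords_zero, Nat.card_unique]

theorem card_returnWords_succ [Finite α] (n : ℕ) :
    Nat.card (returnWords c (n + 1)) =
      ∑ p ∈ antidiagonal n,
        Nat.card (firstReturnWords c (p.1 + 1)) * Nat.card (returnWords c p.2) := by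
  rw [← Nat.card_congr (Equiv.ofBijective _
      ⟨concatFirstReturn_injective (c := c) n, concatFirstReturn_surjective n⟩),
    Nat.card_sigma, ← sum_coe_sort (antidiagonal n)]
  simp only [Nat.card_prod]

end FirstReturn

theorem Nat.card_subtype_ofFn {α β : Type*} (c : α → β) (d : ℕ) (P : List β → Prop) :
    Nat.card {w : Fin d → α // P (List.ofFn fun i => c (w i))} =
      Nat.card {l : List α // l.length = d ∧ P (l.map c)} :=
  Nat.card_congr <| ((Equiv.vectorEquivFin α d).symm.subtypeEquiv
    (q := fun v => P (v.toList.map c)) fun w => by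
      simp only [Equiv.vectorEquivFin, Equiv.coe_fn_symm_mk, List.Vector.toList_ofFn,
        List.map_ofFn]
      rfl).trans
    (Equiv.subtypeSubtypeEquivSubtypeInter _ fun l : List α => P (l.map c))

open DihedralGroup

theorem dihedral_free_generators_general (m : ℕ) (a b : ℕ → ℕ)
    (ha : ∀ d, a d =
      Nat.card {w : Fin d → {x // x ∈ ({r 1, sr 0} : Finset (DihedralGroup m))} //
        (List.ofFn fun i => (w i : DihedralGroup m)).prod = 1})
    (hb0 : b 0 = 0)
    (hb : ∀ d, 0 < d → b d =
      Nat.card {w : Fin d → {x // x ∈ ({r 1, sr 0} : Finset (DihedralGroup m))} //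
        (List.ofFn fun i => (w i : DihedralGroup m)).prod = 1 ∧
        ∀ j : ℕ, 0 < j → j < d →
          ((List.ofFn fun i => (w i : DihedralGroup m)).take j).prod ≠ 1}) :
    (PowerSeries.mk fun d => (a d : ℚ)) * (1 - PowerSeries.mk fun d => (b d : ℚ)) = 1 := by
  let c : {x // x ∈ ({r 1, sr 0} : Finset (DihedralGroup m))} → DihedralGroup m := (↑)
  have hA (d : ℕ) : a d = Nat.card (returnWords c d) := by
    rw [ha, Nat.card_subtype_ofFn c d (fun l => l.prod = 1)]
    rfl
  have hB (d : ℕ) : b (d + 1) = Nat.card (firstReturnWords c (d + 1)) := by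
    rw [hb _ d.succ_pos, Nat.card_subtype_ofFn c _
      (fun l => l.prod = 1 ∧ ∀ j, 0 < j → j < d + 1 → (l.take j).prod ≠ 1)]
    rfl
  refine PowerSeries.mk_mul_one_sub_mk_eq_one (by rw [hA, card_returnWords_zero, Nat.cast_one])
    (by rw [hb0, Nat.cast_zero]) fun n => ?_
  rw [hA, card_returnWords_succ]
  push_cast [hA, hB]
  rfl

/-- **Free generators of `T(V¹)^{D_m}` count words which do not cross the identity.**
Let `m ≥ 3`. Let `a d` be the number of words of length `d` over `{r, s}` in `D_m`
reducing to the identity, and `b d` the number of such words of length `d ≥ 1` which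
moreover do not cross the identity (`b 0 = 0`). Then `(Σ a_d q^d)·(1 − Σ b_d q^d) = 1`
in `ℚ⟦q⟧`: the `b d` count the free generators of degree `d` of `T(V¹)^{D_m}`. -/
theorem dihedral_free_generators (m : ℕ) (hm : 3 ≤ m) (a b : ℕ → ℕ)
    (ha : ∀ d, a d =
      Nat.card {w : Fin d → {x // x ∈ ({r 1, sr 0} : Finset (DihedralGroup m))} //
        (List.ofFn fun i => (w i : DihedralGroup m)).prod = 1})
    (hb0 : b 0 = 0)
    (hb : ∀ d, 0 < d → b d =
      Nat.card {w : Fin d → {x // x ∈ ({r 1, sr 0} : Finset (DihedralGroup m))} //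
        (List.ofFn fun i => (w i : DihedralGroup m)).prod = 1 ∧
        ∀ j : ℕ, 0 < j → j < d →
          ((List.ofFn fun i => (w i : DihedralGroup m)).take j).prod ≠ 1}) :
    (PowerSeries.mk fun d => (a d : ℚ)) * (1 - PowerSeries.mk fun d => (b d : ℚ)) = 1 :=
  dihedral_free_generators_general m a b ha hb0 hb
end

section
/- Let m ≥ 3 and for d ≥ 0 let a_d be the number of words of length d over {r, s} in D_m that reduce to the identity e, and set A(q) = Σ_{d≥0} a_d q^d ∈ ℚ⟦q⟧. Then 2·(A(q) − 1)·( Σ_{i=0}^{⌊m/2⌋} C(m, 2i)·(1 − 4q²)^i − (2q)^m ) = (2q)^m + Σ_{i=0}^{⌊m/2⌋} ( C(m+1, 2i+1) − 2·C(m, 2i) )·(1 − 4q²)^i, where C(a,b) denotes the binomial coefficient. Equivalently, the Hilbert–Poincaré series of T(V¹)^{D_m} equals 1 + (1/2)·[ (2q)^m + Σ_{i=0}^{⌊m/2⌋}(C(m+1,2i+1) − 2C(m,2i))(1−4q²)^i ] / [ Σ_{i=0}^{⌊m/2⌋} C(m,2i)(1−4q²)^i − (2q)^m ]. -/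
/-!
Let `u g` be the generating series of words over `{r, s}` with product `g`. Splitting off the
first letter gives `u g = [g = 1] + X * (u (r⁻¹ g) + u (s g))`, and this recursion determines
the family `u`. Let `Λ = Σ catalan n X^(2n+1)` be the root of `Λ = X (1 + Λ²)`. Then `Λ^|n|`
solves the recursion of the walk `n ↦ n ± 1` on `ℤ` up to a defect at `0`, and folding it onto
`ℤ/m` gives `φ k = Λ^k + Λ^(m-k)` with `φ k = X (φ (k+1) + φ (k-1)) + [k = 0] (1 - 2XΛ)(1 - Λ^m)`.
From `φ` one writes `(1 - 2XΛ)(1 - Λ^m) u g` down explicitly; at `g = e` it is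
`1 - XΛ + XΛ Λ^m`. Finally, with `t = 1 - 2XΛ` we have `t² = 1 - 4X²`, so the two binomial sums
are the even and odd parts of `(1 ± t)^m`, and the claim reduces to a polynomial identity in
`X`, `Λ` and `Λ^m`.
-/

open DihedralGroup PowerSeries Finset

section Words

variable {G : Type*} [Group G] (R : Type*) [CommRing R] (S : Finset G)

noncomputable def wordCount (d : ℕ) (g : G) : ℕ :=
  Nat.card {w : Fin d → S // (List.ofFn fun i => (w i : G)).prod = g}

lemma wordCount_zero [DecidableEq G] (g : G) : wordCount S 0 g = if g = 1 then 1 else 0 := by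
  simp only [wordCount, List.ofFn_zero, List.prod_nil]
  split_ifs with h <;> simp [h, eq_comm]

lemma wordCount_succ (d : ℕ) (g : G) :
    wordCount S (d + 1) g = ∑ s ∈ S, wordCount S d ((s : G)⁻¹ * g) := by
  let e : {w : Fin (d + 1) → S // (List.ofFn fun i => (w i : G)).prod = g} ≃
      Σ s : S, {w : Fin d → S // (List.ofFn fun i => (w i : G)).prod = (s : G)⁻¹ * g} :=
    ((Fin.consEquiv fun _ => S).symm.subtypeEquiv fun w => by
        simp [List.ofFn_succ, eq_inv_mul_iff_mul_eq, Fin.tail]).trans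
      (Equiv.subtypeProdEquivSigmaSubtype fun s v => _)
  rw [wordCount, Nat.card_congr e, Nat.card_sigma, ← sum_coe_sort S]
  rfl

noncomputable def wordSeries (g : G) : R⟦X⟧ :=
  mk fun d => (wordCount S d g : R)

variable {R}

lemma wordSeries_eq [DecidableEq G] (g : G) :
    wordSeries R S g = (if g = 1 then 1 else 0) + X * ∑ s ∈ S, wordSeries R S (s⁻¹ * g) := by
  ext (_ | d)
  · simp [wordSeries, wordCount_zero]
  · simp [wordSeries, wordCount_succ, apply_ite (coeff (d + 1)), coeff_one]

lemma eq_mul_wordSeries [DecidableEq G] {c : R⟦X⟧} {f : G → R⟦X⟧}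
    (hf : ∀ g, f g = (if g = 1 then c else 0) + X * ∑ s ∈ S, f (s⁻¹ * g)) (g : G) :
    f g = c * wordSeries R S g := by
  set h : G → R⟦X⟧ := fun g => f g - c * wordSeries R S g
  have hh : ∀ g, h g = X * ∑ s ∈ S, h (s⁻¹ * g) := fun g => by
    simp only [h, sum_sub_distrib, ← mul_sum]
    rw [hf g, wordSeries_eq S g]
    split_ifs <;> ring
  suffices ∀ n g, coeff n (h g) = 0 from sub_eq_zero.1 (ext fun n => this n g)
  intro n
  induction n with
  | zero => intro g; rw [hh, coeff_zero_X_mul]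
  | succ n ih => intro g; simp [hh g, coeff_succ_X_mul, ih]

end Words

lemma Finset.sum_range_two_mul {M : Type*} [AddCommMonoid M] (f : ℕ → M) (n : ℕ) :
    ∑ k ∈ range (2 * n), f k = ∑ i ∈ range n, (f (2 * i) + f (2 * i + 1)) := by
  induction n with
  | zero => simp
  | succ n ih =>
    rw [mul_add, mul_one, sum_range_succ, sum_range_succ, sum_range_succ, ih, add_assoc]

lemma add_one_pow_eq_sum {R : Type*} [CommSemiring R] (z : R) (n : ℕ) :
    (z + 1) ^ n = ∑ k ∈ range (n + 1), (n.choose k : R) * z ^ k := by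
  rw [add_pow]
  simp [mul_comm]

section Binomial

variable {R : Type*} [CommRing R]

lemma one_add_pow_add_one_sub_pow (y : R) {n N : ℕ} (h : n < 2 * N) :
    (1 + y) ^ n + (1 - y) ^ n = 2 * ∑ i ∈ range N, (n.choose (2 * i) : R) * y ^ (2 * i) := by
  set f : ℕ → R := fun k => n.choose k * (y ^ k + (-y) ^ k)
  have hf : ∀ k ≥ n + 1, f k = 0 := fun k hk => by simp [f, Nat.choose_eq_zero_of_lt hk]
  calc (1 + y) ^ n + (1 - y) ^ n = ∑ k ∈ range (n + 1), f k := by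
        rw [add_comm 1, ← neg_add_eq_sub y 1, add_one_pow_eq_sum, add_one_pow_eq_sum,
          ← sum_add_distrib]
        simp only [f, mul_add]
    _ = ∑ k ∈ range (2 * N), f k := (eventually_constant_sum hf (by omega)).symm
    _ = _ := by
        rw [sum_range_two_mul, mul_sum]
        refine sum_congr rfl fun i _ => ?_
        simp only [f, (even_two_mul i).neg_pow, (odd_two_mul_add_one i).neg_pow]
        ring

lemma one_add_pow_sub_one_sub_pow (y : R) {n N : ℕ} (h : n < 2 * N) :
    (1 + y) ^ (n + 1) - (1 - y) ^ (n + 1) =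
      2 * y * ∑ i ∈ range N, ((n + 1).choose (2 * i + 1) : R) * y ^ (2 * i) := by
  set f : ℕ → R := fun k => (n + 1).choose (k + 1) * (y ^ (k + 1) - (-y) ^ (k + 1))
  have hf : ∀ k ≥ n + 1, f k = 0 := fun k hk => by
    simp [f, Nat.choose_eq_zero_of_lt (Nat.succ_lt_succ hk)]
  calc (1 + y) ^ (n + 1) - (1 - y) ^ (n + 1) = ∑ k ∈ range (n + 1), f k := by
        rw [add_comm 1, ← neg_add_eq_sub y 1, add_one_pow_eq_sum, add_one_pow_eq_sum,
          ← sum_sub_distrib, sum_range_succ']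
        simp only [f, mul_sub, pow_zero, sub_self, add_zero]
    _ = ∑ k ∈ range (2 * N), f k := (eventually_constant_sum hf (by omega)).symm
    _ = _ := by
        rw [sum_range_two_mul, mul_sum]
        refine sum_congr rfl fun i _ => ?_
        simp only [f, Even.neg_pow (⟨i + 1, by ring⟩ : Even (2 * i + 1 + 1)),
          (odd_two_mul_add_one i).neg_pow]
        ring

end Binomial

section OddCatalan

variable (R : Type*) [CommRing R]

noncomputable def oddCatalanSeries : R⟦X⟧ :=
  X * expand 2 two_ne_zero (map (Nat.castRingHom R) catalanSeries)

local notation "Λ" => oddCatalanSeries R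

variable {R}

lemma oddCatalanSeries_eq : Λ = X + X * Λ ^ 2 := by
  have h := congrArg (fun f => expand 2 two_ne_zero (map (Nat.castRingHom R) f))
    catalanSeries_sq_mul_X_add_one
  simp only [map_add, map_mul, map_pow, map_X, map_one, expand_X] at h
  simp only [oddCatalanSeries]
  linear_combination (-X) * h

lemma constantCoeff_oddCatalanSeries : constantCoeff Λ = 0 := by
  simp [oddCatalanSeries]

lemma oddCatalanSeries_pow_succ (j : ℕ) :
    Λ ^ (j + 1) = X * (Λ ^ (j + 2) + Λ ^ j) := by
  linear_combination Λ ^ j * oddCatalanSeries_eq (R := R)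

lemma X_eq_one_sub_X_mul_oddCatalanSeries : X = (1 - X * Λ) * Λ := by
  linear_combination (-1) * oddCatalanSeries_eq (R := R)

lemma one_sub_two_X_mul_oddCatalanSeries_sq : (1 - 2 * X * Λ) ^ 2 = 1 - 4 * X ^ 2 := by
  linear_combination (-4 * X) * oddCatalanSeries_eq (R := R)

lemma one_sub_one_sub_two_X_mul_oddCatalanSeries :
    1 - (1 - 2 * X * Λ) = 2 * (1 - X * Λ) * Λ ^ 2 := by
  linear_combination 2 * Λ * X_eq_one_sub_X_mul_oddCatalanSeries (R := R)

lemma isUnit_one_sub_two_X_mul_oddCatalanSeries : IsUnit (1 - 2 * X * Λ) := by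
  simp [isUnit_iff_constantCoeff, constantCoeff_oddCatalanSeries]

variable (R) (m : ℕ)

noncomputable def cycleSeries (j : ℕ) : R⟦X⟧ := Λ ^ j + Λ ^ (m - j)

variable {R}

lemma cycleSeries_eq_of_pos_of_lt {j : ℕ} (h0 : 0 < j) (hj : j < m) :
    cycleSeries R m j = X * (cycleSeries R m (j + 1) + cycleSeries R m (j - 1)) := by
  obtain ⟨i, rfl⟩ : ∃ i, j = i + 1 := ⟨j - 1, by omega⟩
  obtain ⟨l, hl⟩ : ∃ l, m - (i + 1) = l + 1 := ⟨m - (i + 1) - 1, by omega⟩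
  rw [cycleSeries, cycleSeries, cycleSeries, hl, show m - (i + 1 + 1) = l by omega,
    show m - (i + 1 - 1) = l + 2 by omega, Nat.add_sub_cancel]
  linear_combination oddCatalanSeries_pow_succ (R := R) i + oddCatalanSeries_pow_succ (R := R) l

lemma cycleSeries_zero_eq (hm : 0 < m) :
    cycleSeries R m 0 =
      X * (cycleSeries R m 1 + cycleSeries R m (m - 1)) + (1 - 2 * X * Λ) * (1 - Λ ^ m) := by
  obtain ⟨n, rfl⟩ : ∃ n, m = n + 1 := ⟨m - 1, by omega⟩
  rw [cycleSeries, cycleSeries, cycleSeries, Nat.add_sub_cancel, Nat.sub_zero,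
    show n + 1 - n = 1 by omega]
  linear_combination (2 * Λ ^ n) * oddCatalanSeries_eq (R := R)

lemma cycleSeries_val_eq (hm : 1 < m) (k : ZMod m) :
    cycleSeries R m k.val = X * (cycleSeries R m (k + 1).val + cycleSeries R m (k - 1).val) +
      if k = 0 then (1 - 2 * X * Λ) * (1 - Λ ^ m) else 0 := by
  have : NeZero m := ⟨by omega⟩
  have : Fact (1 < m) := ⟨hm⟩
  rcases eq_or_ne k 0 with rfl | hk
  · rw [zero_add, zero_sub, ZMod.val_zero, ZMod.val_one, ZMod.val_neg_of_ne_zero, ZMod.val_one,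
      if_pos rfl, cycleSeries_zero_eq m (by omega)]
  · have h0 : 0 < k.val := Nat.pos_of_ne_zero ((ZMod.val_ne_zero k).2 hk)
    have hsucc : cycleSeries R m (k + 1).val = cycleSeries R m (k.val + 1) := by
      rw [ZMod.val_add, ZMod.val_one]
      rcases (show k.val + 1 ≤ m from k.val_lt).lt_or_eq with h | h
      · rw [Nat.mod_eq_of_lt h]
      · rw [h, Nat.mod_self, cycleSeries, cycleSeries, Nat.sub_self, Nat.sub_zero, add_comm]
    rw [if_neg hk, add_zero, hsucc, ZMod.val_sub (by rw [ZMod.val_one]; omega), ZMod.val_one,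
      cycleSeries_eq_of_pos_of_lt m h0 k.val_lt]

noncomputable def wordSeriesNumerator : DihedralGroup m → R⟦X⟧
  | r k => cycleSeries R m k.val - X * cycleSeries R m (k + 1).val
  | sr k => X * cycleSeries R m k.val

lemma wordSeriesNumerator_eq (hm : 1 < m) (g : DihedralGroup m) :
    wordSeriesNumerator m g = (if g = 1 then (1 - 2 * X * Λ) * (1 - Λ ^ m) else 0) +
      X * ∑ s ∈ {r 1, sr 0}, wordSeriesNumerator m (s⁻¹ * g) := by
  rw [Finset.sum_pair (by simp)]
  rcases g with k | k
  · have h := cycleSeries_val_eq (R := R) m hm k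
    simp only [wordSeriesNumerator, inv_r, r_mul_r, inv_sr, sr_mul_r, one_def, r.injEq, zero_add,
      neg_add_eq_sub, sub_add_cancel] at h ⊢
    linear_combination h
  · simp only [wordSeriesNumerator, inv_r, r_mul_sr, inv_sr, sr_mul_sr, one_def, reduceCtorEq,
      if_false, sub_neg_eq_add, sub_zero]
    ring

lemma mul_wordSeries_one (hm : 1 < m) :
    (1 - 2 * X * Λ) * (1 - Λ ^ m) * wordSeries R ({r 1, sr 0} : Finset (DihedralGroup m)) 1 =
      1 - X * Λ + X * Λ * Λ ^ m := by
  have : Fact (1 < m) := ⟨hm⟩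
  rw [← eq_mul_wordSeries _ (wordSeriesNumerator_eq m hm), one_def]
  obtain ⟨n, rfl⟩ : ∃ n, m = n + 1 := ⟨m - 1, by omega⟩
  simp only [wordSeriesNumerator, zero_add, ZMod.val_zero, ZMod.val_one, cycleSeries,
    Nat.sub_zero, Nat.add_sub_cancel, pow_zero, pow_one]
  linear_combination (-Λ ^ n) * X_eq_one_sub_X_mul_oddCatalanSeries (R := R)

lemma two_mul_X_pow : (2 * X : R⟦X⟧) ^ m = (2 * (1 - X * Λ)) ^ m * Λ ^ m := by
  rw [← mul_pow]
  congr 1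
  linear_combination 2 * X_eq_one_sub_X_mul_oddCatalanSeries (R := R)

lemma two_mul_sum_choose_even :
    2 * ∑ i ∈ range (m / 2 + 1), C (m.choose (2 * i) : R) * (1 - 4 * X ^ 2) ^ i =
      (2 * (1 - X * Λ)) ^ m * (1 + (Λ ^ m) ^ 2) := by
  simp_rw [← one_sub_two_X_mul_oddCatalanSeries_sq, ← pow_mul, map_natCast]
  rw [← one_add_pow_add_one_sub_pow _ (by omega), one_sub_one_sub_two_X_mul_oddCatalanSeries,
    show 1 + (1 - 2 * X * Λ) = 2 * (1 - X * Λ) by ring, mul_pow _ (Λ ^ 2)]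
  ring

lemma mul_sum_choose_odd [IsDomain R] [CharZero R] :
    (1 - 2 * X * Λ) * ∑ i ∈ range (m / 2 + 1),
        C ((m + 1).choose (2 * i + 1) : R) * (1 - 4 * X ^ 2) ^ i =
      (2 * (1 - X * Λ)) ^ m * (1 - X * Λ - X * Λ * (Λ ^ m) ^ 2) := by
  have h := one_add_pow_sub_one_sub_pow (1 - 2 * X * Λ) (by omega : m < 2 * (m / 2 + 1))
  simp_rw [← one_sub_two_X_mul_oddCatalanSeries_sq, ← pow_mul, map_natCast]
  rw [one_sub_one_sub_two_X_mul_oddCatalanSeries, show 1 + (1 - 2 * X * Λ) = 2 * (1 - X * Λ) by ring, mul_pow _ (Λ ^ 2),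
    ← pow_mul] at h
  have h2 : (2 : R⟦X⟧) ≠ 0 := fun h2 => two_ne_zero (α := R) <| by
    simpa only [map_ofNat, map_zero] using congrArg constantCoeff h2
  refine mul_left_cancel₀ h2 ?_
  linear_combination
    -h - 2 * (2 * (1 - X * Λ)) ^ m * (Λ ^ m) ^ 2 * Λ * oddCatalanSeries_eq (R := R)

end OddCatalan

/-- **Closed form for the Hilbert–Poincaré series of `T(V¹)^{D_m}`.**
Let `m ≥ 3` and let `a d` be the number of words of length `d` over `{r, s}` in `D_m`
which reduce to the identity, with generating series `A(q) = Σ a_d q^d ∈ ℚ⟦q⟧` (the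
Hilbert–Poincaré series of `T(V¹)^{D_m}`). Then
`2(A(q) − 1)(Σ_{i≤⌊m/2⌋} C(m,2i)(1−4q²)^i − (2q)^m)
  = (2q)^m + Σ_{i≤⌊m/2⌋}(C(m+1,2i+1) − 2C(m,2i))(1−4q²)^i`. -/
theorem dihedral_hilbert_series (m : ℕ) (hm : 3 ≤ m) (a : ℕ → ℕ)
    (ha : ∀ d, a d =
      Nat.card {w : Fin d → {x // x ∈ ({r 1, sr 0} : Finset (DihedralGroup m))} //
        (List.ofFn fun i => (w i : DihedralGroup m)).prod = 1}) :
    2 * ((PowerSeries.mk fun d => (a d : ℚ)) - 1) *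
        ((∑ i ∈ Finset.range (m / 2 + 1),
            PowerSeries.C (R := ℚ) (m.choose (2 * i) : ℚ) *
              (1 - 4 * (PowerSeries.X : PowerSeries ℚ) ^ 2) ^ i) -
          (2 * PowerSeries.X) ^ m) =
      (2 * (PowerSeries.X : PowerSeries ℚ)) ^ m +
        ∑ i ∈ Finset.range (m / 2 + 1),
          PowerSeries.C (R := ℚ) (((m + 1).choose (2 * i + 1) : ℚ) - 2 * (m.choose (2 * i) : ℚ)) *
            (1 - 4 * (PowerSeries.X : PowerSeries ℚ) ^ 2) ^ i := by
  have hA : (mk fun d => (a d : ℚ)) =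
      wordSeries ℚ ({r 1, sr 0} : Finset (DihedralGroup m)) 1 := by
    ext d
    simp [wordSeries, wordCount, ha]
  have hsplit : ∑ i ∈ range (m / 2 + 1),
        C (((m + 1).choose (2 * i + 1) : ℚ) - 2 * (m.choose (2 * i) : ℚ)) *
          (1 - 4 * X ^ 2) ^ i =
      ∑ i ∈ range (m / 2 + 1), C ((m + 1).choose (2 * i + 1) : ℚ) * (1 - 4 * X ^ 2) ^ i -
        2 * ∑ i ∈ range (m / 2 + 1), C (m.choose (2 * i) : ℚ) * (1 - 4 * X ^ 2) ^ i := by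
    simp only [mul_sum, ← sum_sub_distrib, map_sub, map_mul, map_ofNat, sub_mul, mul_assoc]
  rw [hA, hsplit]
  have hD := mul_wordSeries_one (R := ℚ) m (by omega)
  have hE := two_mul_sum_choose_even (R := ℚ) m
  have hO := mul_sum_choose_odd (R := ℚ) m
  have hP := two_mul_X_pow (R := ℚ) m
  set A := wordSeries ℚ ({r 1, sr 0} : Finset (DihedralGroup m)) 1
  set t := 1 - 2 * X * oddCatalanSeries ℚ
  set μ := oddCatalanSeries ℚ ^ m
  refine isUnit_one_sub_two_X_mul_oddCatalanSeries.mul_left_cancel ?_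
  -- with `a = 1 - XΛ`, `b = XΛ`: both sides times `t = a - b` are `(2a)^m (1 - μ) (aμ + b)`
  linear_combination (t * A) * hE - (2 * t * A - t) * hP - hO +
    (2 * (1 - X * oddCatalanSeries ℚ)) ^ m * (1 - μ) * hD
end

section
/- Let m ≥ 3 and d ≥ 1. The number of words of length d over {r, s} in D_m that reduce to the identity e equals (if d is even then C(d−1, d/2) else 0) + Σ_ℓ C(d, (d − ℓm)/2), where the sum runs over all integers ℓ ≥ 1 with ℓm ≤ d and d ≡ ℓm (mod 2), and C(a,b) denotes the binomial coefficient. -/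
/-!
Encode a word `w₁ ⋯ w_d` over `{r, s}` by the set `A ⊆ {1, …, d}` of positions `j` at which the
suffix `w_j ⋯ w_d` is a reflection. Then `w_j = s` exactly when membership in `A` changes between
`j` and `j + 1` (with `d + 1 ∉ A`), so this is a bijection, and the product of the word is
`r^(d - 2|A|)` if `1 ∉ A` and a reflection otherwise. Hence the count is
`∑_q C(d-1, q) [m ∣ d - 2q]`; sorting the `q` by `d - 2q ∈ {0, ℓm, -ℓm}` and merging the two terms
`q = (d ∓ ℓm)/2` by Pascal's rule gives the formula.
-/

open DihedralGroup Finset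

lemma List.count_ofFn {α : Type*} [DecidableEq α] {n : ℕ} (f : Fin n → α) (a : α) :
    (List.ofFn f).count a = #{i | f i = a} := by
  rw [List.ofFn_eq_map, List.count, List.countP_map, card_def, filter_val, Fin.univ_def]
  simp [List.countP_eq_length_filter, Function.comp_def, Bool.beq_eq_decide_eq]

lemma Finset.card_filter_powerset_card {α : Type*} (s : Finset α) (p : ℕ → Prop)
    [DecidablePred p] :
    #{A ∈ s.powerset | p #A} = ∑ q ∈ range (#s + 1), if p q then (#s).choose q else 0 := by
  rw [card_filter, sum_powerset_apply_card (fun q => if p q then 1 else 0)]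
  simp

lemma Nat.choose_eq_choose_pred_add_choose_pred_sub {n p : ℕ} (hn : 0 < n) (hp : p ≤ n) :
    n.choose p = (n - 1).choose p + (n - 1).choose (n - p) := by
  obtain ⟨n, rfl⟩ : ∃ k, n = k + 1 := ⟨n - 1, by omega⟩
  rcases p with _ | p
  · simp
  · rw [Nat.add_sub_cancel, Nat.choose_succ_succ', add_comm, Nat.add_sub_add_right,
      Nat.choose_symm (by omega)]

namespace DihedralWords

variable {m d : ℕ}

def admissibleMultiples (m d : ℕ) : Finset ℕ :=
  (Icc 1 d).filter (fun l => l * m ≤ d ∧ d % 2 = (l * m) % 2)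

lemma mem_admissibleMultiples (hm : 0 < m) {l : ℕ} :
    l ∈ admissibleMultiples m d ↔ 0 < l ∧ l * m ≤ d ∧ d % 2 = (l * m) % 2 := by
  have := Nat.le_mul_of_pos_right l hm
  simp only [admissibleMultiples, mem_filter, mem_Icc]
  omega

lemma filter_dvd_eq_union (hm : 0 < m) :
    (range (d + 1)).filter (fun q : ℕ => (m : ℤ) ∣ d - 2 * q) =
      ({d / 2} : Finset ℕ).filter (fun _ => d % 2 = 0) ∪
        ((admissibleMultiples m d).image (fun l => (d - l * m) / 2) ∪
          (admissibleMultiples m d).image (fun l => d - (d - l * m) / 2)) := by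
  ext q
  simp only [mem_filter, mem_range, mem_union, mem_singleton, mem_image,
    mem_admissibleMultiples hm]
  constructor
  · rintro ⟨hq, c, hc⟩
    obtain ⟨l, rfl | rfl⟩ := Int.eq_nat_or_neg c
    · rcases l.eq_zero_or_pos with rfl | hl
      · left; omega
      · have : ((l * m : ℕ) : ℤ) = d - 2 * q := by push_cast; linarith
        exact Or.inr (Or.inl ⟨l, ⟨hl, by omega, by omega⟩, by omega⟩)
    · rcases l.eq_zero_or_pos with rfl | hl
      · left; omega
      · have : ((l * m : ℕ) : ℤ) = 2 * q - d := by push_cast; linarith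
        exact Or.inr (Or.inr ⟨l, ⟨hl, by omega, by omega⟩, by omega⟩)
  · rintro (⟨rfl, hd⟩ | ⟨l, ⟨-, hle, hpar⟩, rfl⟩ | ⟨l, ⟨-, hle, hpar⟩, rfl⟩)
    · exact ⟨by omega, 0, by omega⟩
    · exact ⟨by omega, Dvd.intro_left l (by omega)⟩
    · exact ⟨by omega, Dvd.intro_left (-l) (by rw [neg_mul]; omega)⟩

lemma sum_ite_dvd_choose_pred (hm : 0 < m) (hd : 0 < d) :
    (∑ q ∈ range d, if (m : ℤ) ∣ d - 2 * q then (d - 1).choose q else 0) =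
      (if d % 2 = 0 then (d - 1).choose (d / 2) else 0) +
        ∑ l ∈ admissibleMultiples m d, d.choose ((d - l * m) / 2) := by
  have hG : ∀ l ∈ admissibleMultiples m d, 1 ≤ l * m ∧ l * m ≤ d ∧ d % 2 = (l * m) % 2 := by
    intro l hl
    obtain ⟨hl, h⟩ := (mem_admissibleMultiples hm).mp hl
    exact ⟨Nat.mul_pos hl hm, h⟩
  have hlo_inj : Set.InjOn (fun l => (d - l * m) / 2) (admissibleMultiples m d) := by
    intro l hl l' hl' h
    have := hG l hl; have := hG l' hl'
    exact Nat.eq_of_mul_eq_mul_right hm (by simp only at h; omega)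
  have hhi_inj : Set.InjOn (fun l => d - (d - l * m) / 2) (admissibleMultiples m d) := by
    intro l hl l' hl' h
    have := hG l hl; have := hG l' hl'
    exact Nat.eq_of_mul_eq_mul_right hm (by simp only at h; omega)
  calc (∑ q ∈ range d, if (m : ℤ) ∣ d - 2 * q then (d - 1).choose q else 0)
      = ∑ q ∈ (range (d + 1)).filter (fun q : ℕ => (m : ℤ) ∣ d - 2 * q), (d - 1).choose q := by
        rw [sum_filter, sum_range_succ, Nat.choose_eq_zero_of_lt (by omega)]
        simp
    _ = _ := by
        rw [filter_dvd_eq_union hm, sum_union, sum_union, sum_filter, sum_singleton,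
          sum_image hlo_inj, sum_image hhi_inj, ← sum_add_distrib]
        · congr 1
          refine sum_congr rfl fun l hl => ?_
          have := hG l hl
          exact (Nat.choose_eq_choose_pred_add_choose_pred_sub hd (by omega)).symm
        · rw [disjoint_left]
          simp only [mem_image]
          rintro _ ⟨l, hl, rfl⟩ ⟨l', hl', h⟩
          have := hG l hl; have := hG l' hl'
          omega
        · rw [disjoint_left]
          simp only [mem_union, mem_image]
          rintro q hq (⟨l, hl, rfl⟩ | ⟨l, hl, rfl⟩) <;>
          · rw [mem_filter, mem_singleton] at hq
            have := hG l hl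
            omega

def letter (m : ℕ) (b : Bool) : DihedralGroup m := if b then sr 0 else r 1

def toggles : List Bool → List Bool
  | [] => []
  | a :: L => xor a (L.headD false) :: toggles L

@[simp] lemma length_toggles (L : List Bool) : (toggles L).length = L.length := by
  induction L with
  | nil => rfl
  | cons a L ih => simp [toggles, ih]

lemma toggles_injective : Function.Injective toggles := by
  intro L
  induction L with
  | nil => intro L' h; cases L' <;> simp_all [toggles]
  | cons a L ih =>
    rintro (_ | ⟨a', L'⟩) h
    · simp [toggles] at h
    · simp only [toggles, List.cons.injEq] at h
      obtain rfl := ih h.2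
      simpa using h.1

lemma prod_map_letter_toggles (L : List Bool) :
    ((toggles L).map (letter m)).prod =
      if L.headD false then sr ((L.length : ZMod m) - 2 * (L.count true : ZMod m) + 1)
      else r ((L.length : ZMod m) - 2 * (L.count true : ZMod m)) := by
  induction L with
  | nil => simp [toggles]
  | cons a L ih =>
    rw [toggles, List.map_cons, List.prod_cons, ih]
    cases a <;> cases L.headD false <;> simp [letter] <;> ring

abbrev Generator (m : ℕ) := {x // x ∈ ({r 1, sr 0} : Finset (DihedralGroup m))}

def generator (m : ℕ) (b : Bool) : Generator m := ⟨letter m b, by cases b <;> simp [letter]⟩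

lemma generator_injective : Function.Injective (generator m) := by
  intro a b h
  cases a <;> cases b <;> simp_all [generator, letter]

def indicatorList (A : Finset (Fin d)) : List Bool := List.ofFn fun i => decide (i ∈ A)

@[simp] lemma length_indicatorList (A : Finset (Fin d)) : (indicatorList A).length = d := by
  simp [indicatorList]

@[simp] lemma count_true_indicatorList (A : Finset (Fin d)) :
    (indicatorList A).count true = #A := by
  simp [indicatorList, List.count_ofFn]

lemma headD_indicatorList {k : ℕ} (A : Finset (Fin (k + 1))) :
    (indicatorList A).headD false = decide (0 ∈ A) := by
  simp [indicatorList, List.ofFn_succ]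

lemma indicatorList_injective : Function.Injective (indicatorList (d := d)) := by
  intro A B h
  ext i
  simpa using congrFun (List.ofFn_injective h) i

/-- The word whose suffix `w i ⋯ w (d - 1)` is a reflection exactly when `i ∈ A`. -/
def wordOf (m : ℕ) (A : Finset (Fin d)) : Fin d → Generator m :=
  fun i => generator m ((toggles (indicatorList A))[i.1]'(by simp))

lemma ofFn_wordOf (A : Finset (Fin d)) :
    List.ofFn (fun i => (wordOf m A i : DihedralGroup m)) =
      (toggles (indicatorList A)).map (letter m) := by
  apply List.ext_getElem <;> simp [wordOf, generator]

lemma wordOf_injective : Function.Injective (wordOf (d := d) m) := by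
  intro A B h
  apply indicatorList_injective
  apply toggles_injective
  apply List.ext_getElem (by simp)
  intro i hA hB
  simpa using generator_injective (congrFun h ⟨i, by simpa using hA⟩)

lemma wordOf_bijective : Function.Bijective (wordOf (d := d) m) :=
  (Fintype.bijective_iff_injective_and_card _).mpr ⟨wordOf_injective, by simp⟩

lemma prod_wordOf_eq_one_iff (A : Finset (Fin d)) :
    (List.ofFn fun i => (wordOf m A i : DihedralGroup m)).prod = 1 ↔
      (indicatorList A).headD false = false ∧ (m : ℤ) ∣ d - 2 * #A := by
  rw [ofFn_wordOf, prod_map_letter_toggles, length_indicatorList, count_true_indicatorList,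
    ← ZMod.intCast_zmod_eq_zero_iff_dvd]
  cases (indicatorList A).headD false <;> simp [-r_zero, one_def]

lemma card_words_prod_eq_one (hd : 0 < d) :
    Nat.card {w : Fin d → Generator m // (List.ofFn fun i => (w i : DihedralGroup m)).prod = 1} =
      ∑ q ∈ range d, if (m : ℤ) ∣ d - 2 * q then (d - 1).choose q else 0 := by
  obtain ⟨k, rfl⟩ : ∃ k, d = k + 1 := ⟨d - 1, by omega⟩
  rw [← Nat.card_congr ((Equiv.ofBijective _ (wordOf_bijective (m := m))).subtypeEquiv
    fun _ => Iff.rfl), Nat.card_eq_fintype_card, Fintype.card_subtype]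
  simp_rw [Equiv.ofBijective_apply, prod_wordOf_eq_one_iff, headD_indicatorList]
  calc #{A : Finset (Fin (k + 1)) | decide (0 ∈ A) = false ∧ (m : ℤ) ∣ ↑(k + 1) - 2 * ↑(#A)}
      = #{A ∈ (univ.erase (0 : Fin (k + 1))).powerset | (m : ℤ) ∣ ↑(k + 1) - 2 * ↑(#A)} := by
        congr 1; ext A; simp [subset_erase]
    _ = _ := by
        rw [card_filter_powerset_card _ fun q => (m : ℤ) ∣ ↑(k + 1) - 2 * ↑q]
        simp

end DihedralWords

open DihedralWords in
theorem dihedral_wordCount_formula_general (m : ℕ) (hm : 3 ≤ m) (d : ℕ) :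
    Nat.card {w : Fin d → {x // x ∈ ({r 1, sr 0} : Finset (DihedralGroup m))} //
        (List.ofFn fun i => (w i : DihedralGroup m)).prod = 1} =
      (if d % 2 = 0 then (d - 1).choose (d / 2) else 0) +
        ∑ l ∈ (Finset.Icc 1 d).filter (fun l => l * m ≤ d ∧ d % 2 = (l * m) % 2),
          d.choose ((d - l * m) / 2) := by
  rcases d.eq_zero_or_pos with rfl | hd
  · simp
  · rw [card_words_prod_eq_one hd, sum_ite_dvd_choose_pred (by omega) hd, admissibleMultiples]

/-- **Counting words over `{r, s}` in `D_m` which reduce to the identity.**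
For `m ≥ 3` and `d ≥ 1`, the number of words of length `d` over `{r, s}` in `D_m`
reducing to the identity equals
`(if d is even then C(d-1, d/2) else 0) + Σ_ℓ C(d, (d - ℓm)/2)`,
the sum over all `ℓ ≥ 1` with `ℓm ≤ d` and `d ≡ ℓm (mod 2)`. -/
theorem dihedral_wordCount_formula (m : ℕ) (hm : 3 ≤ m) (d : ℕ) (hd : 1 ≤ d) :
    Nat.card {w : Fin d → {x // x ∈ ({r 1, sr 0} : Finset (DihedralGroup m))} //
        (List.ofFn fun i => (w i : DihedralGroup m)).prod = 1} =
      (if d % 2 = 0 then (d - 1).choose (d / 2) else 0) +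
        ∑ l ∈ (Finset.Icc 1 d).filter (fun l => l * m ≤ d ∧ d % 2 = (l * m) % 2),
          d.choose ((d - l * m) / 2) :=
  dihedral_wordCount_formula_general m hm d
end

section
/- In the symmetric group S_3, let a = (12) and b = (132). For d ≥ 1 let b_d be the number of words of length d over {a, b} that reduce to the identity and do not cross the identity, with b_0 = 0. Then in ℚ⟦q⟧ one has (Σ_{d≥1} b_d q^d)·(1 − q − q²) = q²; that is, the generating series of these words is q²/(1 − q − q²), so the b_d are Fibonacci numbers. -/
open Equiv PowerSeries

namespace S3aux

abbrev pa : Equiv.Perm (Fin 3) := Equiv.swap 0 1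
abbrev pb : Equiv.Perm (Fin 3) := Equiv.swap 0 1 * Equiv.swap 0 2
abbrev S := {x // x ∈ ({pa, pb} : Finset (Equiv.Perm (Fin 3)))}

/-- generic peel-off equivalence -/
def equivSigma {α : Type*} {d : ℕ} (Q : (Fin (d+1) → α) → Prop) (R : α → (Fin d → α) → Prop)
    (h : ∀ x v, Q (Fin.cons x v) ↔ R x v) : {w // Q w} ≃ Σ x : α, {v // R x v} :=
  (((Fin.consEquiv (fun _ => α)).subtypeEquiv fun p => Iff.rfl).symm.trans
    (Equiv.subtypeEquivRight fun p => h p.1 p.2)).trans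
    (Equiv.subtypeProdEquivSigmaSubtype R)

def c : ℕ → Equiv.Perm (Fin 3) → ℕ
  | 0, g => if g = 1 then 1 else 0
  | (d+1), g => if g = 1 then 0 else c d (g * pa) + c d (g * pb)

def countSet (g : Equiv.Perm (Fin 3)) (d : ℕ) :=
  {w : Fin d → S //
    g * (List.ofFn fun i => (w i : Equiv.Perm (Fin 3))).prod = 1 ∧
    ∀ j < d, g * ((List.ofFn fun i => (w i : Equiv.Perm (Fin 3))).take j).prod ≠ 1}

lemma ofFn_cons {d : ℕ} (x : S) (v : Fin d → S) :
    (List.ofFn fun i => ((Fin.cons x v : Fin (d+1) → S) i : Equiv.Perm (Fin 3))) =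
      (x : Equiv.Perm (Fin 3)) :: List.ofFn fun i => (v i : Equiv.Perm (Fin 3)) := by
  rw [List.ofFn_succ]
  simp

lemma card_countSet (d : ℕ) (g : Equiv.Perm (Fin 3)) :
    Nat.card (countSet g d) = c d g := by
  induction d generalizing g with
  | zero =>
    rcases eq_or_ne g 1 with rfl | hg
    · rw [c]; simp only [if_pos rfl]
      have h : ∀ w : Fin 0 → S,
          (1 : Equiv.Perm (Fin 3)) * (List.ofFn fun i => (w i : Equiv.Perm (Fin 3))).prod = 1 ∧
          ∀ j < 0, (1:Equiv.Perm (Fin 3)) * ((List.ofFn fun i => (w i : Equiv.Perm (Fin 3))).take j).prod ≠ 1 := by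
        intro w; simp
      exact (Nat.card_congr (Equiv.subtypeUnivEquiv h)).trans Nat.card_unique
    · rw [c, if_neg hg]
      have : IsEmpty (countSet g 0) := by
        constructor; rintro ⟨w, hw, -⟩
        simp at hw
        exact hg hw
      exact Nat.card_of_isEmpty
  | succ d ih =>
    rcases eq_or_ne g 1 with rfl | hg
    · rw [c]; simp only [if_pos rfl]
      have : IsEmpty (countSet 1 (d+1)) := by
        constructor; rintro ⟨w, -, hw⟩
        exact hw 0 (Nat.succ_pos d) (by simp)
      exact Nat.card_of_isEmpty
    · rw [c, if_neg hg]
      have key : ∀ (x : S) (v : Fin d → S),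
          (g * (List.ofFn fun i => ((Fin.cons x v : Fin (d+1) → S) i : Equiv.Perm (Fin 3))).prod = 1 ∧
           ∀ j < d+1, g * ((List.ofFn fun i => ((Fin.cons x v : Fin (d+1) → S) i : Equiv.Perm (Fin 3))).take j).prod ≠ 1)
          ↔ ((g * x) * (List.ofFn fun i => (v i : Equiv.Perm (Fin 3))).prod = 1 ∧
           ∀ j < d, (g * x) * ((List.ofFn fun i => (v i : Equiv.Perm (Fin 3))).take j).prod ≠ 1) := by
        intro x v
        rw [ofFn_cons]
        constructor
        · rintro ⟨h1, h2⟩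
          refine ⟨by rw [List.prod_cons, ← mul_assoc] at h1; exact h1, fun j hj => ?_⟩
          have := h2 (j+1) (by omega)
          rw [List.take_succ_cons, List.prod_cons, ← mul_assoc] at this
          exact this
        · rintro ⟨h1, h2⟩
          refine ⟨by rw [List.prod_cons, ← mul_assoc]; exact h1, fun j hj => ?_⟩
          cases j with
          | zero => simpa using hg
          | succ k =>
            rw [List.take_succ_cons, List.prod_cons, ← mul_assoc]
            exact h2 k (by omega)
      have e := equivSigma
        (fun w : Fin (d+1) → S =>
          g * (List.ofFn fun i => (w i : Equiv.Perm (Fin 3))).prod = 1 ∧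
          ∀ j < d+1, g * ((List.ofFn fun i => (w i : Equiv.Perm (Fin 3))).take j).prod ≠ 1)
        (fun (x : S) (v : Fin d → S) =>
          (g * x) * (List.ofFn fun i => (v i : Equiv.Perm (Fin 3))).prod = 1 ∧
          ∀ j < d, (g * x) * ((List.ofFn fun i => (v i : Equiv.Perm (Fin 3))).take j).prod ≠ 1)
        key
      classical
      rw [show Nat.card (countSet g (d+1)) = _ from Nat.card_congr e,
        Nat.card_eq_fintype_card, Fintype.card_sigma]
      simp only [← Nat.card_eq_fintype_card]
      have hab : pa ≠ pb := by decide
      calc (∑ x : S, Nat.card {v : Fin d → S //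
              (g * x) * (List.ofFn fun i => (v i : Equiv.Perm (Fin 3))).prod = 1 ∧
              ∀ j < d, (g * x) * ((List.ofFn fun i => (v i : Equiv.Perm (Fin 3))).take j).prod ≠ 1})
          = ∑ x : S, c d (g * x) := Finset.sum_congr rfl fun x _ => ih _
        _ = ∑ x ∈ ({pa, pb} : Finset (Equiv.Perm (Fin 3))), c d (g * x) :=
            by exact Finset.sum_coe_sort _ (fun y => c d (g * y))
        _ = c d (g * pa) + c d (g * pb) := Finset.sum_pair hab

lemma c_succ (d : ℕ) (g : Equiv.Perm (Fin 3)) :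
    c (d+1) g = if g = 1 then 0 else c d (g * pa) + c d (g * pb) := rfl

lemma c_rec (d : ℕ) :
    c (d+2) pa + c (d+2) pb = (c (d+1) pa + c (d+1) pb) + (c d pa + c d pb) := by
  set u : Equiv.Perm (Fin 3) := Equiv.swap 0 2 with hu
  set v : Equiv.Perm (Fin 3) := Equiv.swap 1 2 with hv
  set q : Equiv.Perm (Fin 3) := Equiv.swap 0 2 * Equiv.swap 0 1 with hq
  have h1 : pa ≠ 1 := by decide
  have h2 : pb ≠ 1 := by decide
  have h3 : u ≠ 1 := by decide
  have h4 : v ≠ 1 := by decide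
  have h5 : q ≠ 1 := by decide
  have e1 : pa * pa = 1 := by decide
  have e2 : pa * pb = u := by decide
  have e3 : pb * pa = v := by decide
  have e4 : pb * pb = q := by decide
  have f1 : u * pa = q := by decide
  have f2 : u * pb = v := by decide
  have f3 : v * pa = pb := by decide
  have f4 : v * pb = pa := by decide
  have g1 : q * pa = u := by decide
  have g2 : q * pb = 1 := by decide
  have c1 : ∀ n, c (n+1) (1 : Equiv.Perm (Fin 3)) = 0 := fun n => by
    rw [c_succ, if_pos rfl]
  rw [show d+2 = (d+1)+1 from rfl, c_succ (d+1) pa, c_succ (d+1) pb, if_neg h1, if_neg h2,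
    e1, e2, e3, e4, c1, c_succ d u, c_succ d v, c_succ d q, if_neg h3, if_neg h4, if_neg h5,
    f1, f2, f3, f4, g1, g2,
    c_succ d pa, c_succ d pb, if_neg h1, if_neg h2, e1, e2, e3, e4]
  omega

lemma card_orig (e : ℕ) :
    Nat.card {w : Fin (e+1) → S //
      (List.ofFn fun i => (w i : Equiv.Perm (Fin 3))).prod = 1 ∧
      ∀ j : ℕ, 0 < j → j < e+1 →
        ((List.ofFn fun i => (w i : Equiv.Perm (Fin 3))).take j).prod ≠ 1}
    = c e pa + c e pb := by
  classical
  have key : ∀ (x : S) (v : Fin e → S),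
      ((List.ofFn fun i => ((Fin.cons x v : Fin (e+1) → S) i : Equiv.Perm (Fin 3))).prod = 1 ∧
       ∀ j : ℕ, 0 < j → j < e+1 →
        ((List.ofFn fun i => ((Fin.cons x v : Fin (e+1) → S) i : Equiv.Perm (Fin 3))).take j).prod ≠ 1)
      ↔ ((x : Equiv.Perm (Fin 3)) * (List.ofFn fun i => (v i : Equiv.Perm (Fin 3))).prod = 1 ∧
       ∀ j < e, (x : Equiv.Perm (Fin 3)) * ((List.ofFn fun i => (v i : Equiv.Perm (Fin 3))).take j).prod ≠ 1) := by
    intro x v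
    rw [ofFn_cons]
    constructor
    · rintro ⟨h1, h2⟩
      refine ⟨by rw [List.prod_cons] at h1; exact h1, fun j hj => ?_⟩
      have := h2 (j+1) (Nat.succ_pos j) (by omega)
      rw [List.take_succ_cons, List.prod_cons] at this
      exact this
    · rintro ⟨h1, h2⟩
      refine ⟨by rw [List.prod_cons]; exact h1, fun j hj0 hj => ?_⟩
      cases j with
      | zero => omega
      | succ k =>
        rw [List.take_succ_cons, List.prod_cons]
        exact h2 k (by omega)
  have e2 := equivSigma
    (fun w : Fin (e+1) → S =>
      (List.ofFn fun i => (w i : Equiv.Perm (Fin 3))).prod = 1 ∧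
      ∀ j : ℕ, 0 < j → j < e+1 →
        ((List.ofFn fun i => (w i : Equiv.Perm (Fin 3))).take j).prod ≠ 1)
    (fun (x : S) (v : Fin e → S) =>
      (x : Equiv.Perm (Fin 3)) * (List.ofFn fun i => (v i : Equiv.Perm (Fin 3))).prod = 1 ∧
      ∀ j < e, (x : Equiv.Perm (Fin 3)) * ((List.ofFn fun i => (v i : Equiv.Perm (Fin 3))).take j).prod ≠ 1)
    key
  rw [Nat.card_congr e2, Nat.card_eq_fintype_card, Fintype.card_sigma]
  simp only [← Nat.card_eq_fintype_card]
  have hab : pa ≠ pb := by decide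
  calc (∑ x : S, Nat.card {v : Fin e → S //
          (x : Equiv.Perm (Fin 3)) * (List.ofFn fun i => (v i : Equiv.Perm (Fin 3))).prod = 1 ∧
          ∀ j < e, (x : Equiv.Perm (Fin 3)) * ((List.ofFn fun i => (v i : Equiv.Perm (Fin 3))).take j).prod ≠ 1})
      = ∑ x : S, c e (x : Equiv.Perm (Fin 3)) := Finset.sum_congr rfl fun x _ => card_countSet e _
    _ = ∑ x ∈ ({pa, pb} : Finset (Equiv.Perm (Fin 3))), c e x :=
        by exact Finset.sum_coe_sort _ (fun y => c e y)
    _ = c e pa + c e pb := Finset.sum_pair hab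

end S3aux


/-- **Free generators of `T(V^{(2,1)})^{S_3}` are counted by Fibonacci numbers.**
In `S_3`, let `a = (12)` and `b = (132)` (0-based: `a = (0 1)` and `b` sends
`0 ↦ 2, 2 ↦ 1, 1 ↦ 0`, i.e. `b = (0 1)·(0 2)`). For `d ≥ 1`, let `b' d` be the number
of words of length `d` over `{a, b}` which reduce to the identity without crossing the
identity (`b' 0 = 0`). Then `(Σ_{d≥1} b'_d q^d)·(1 − q − q²) = q²` in `ℚ⟦q⟧`, i.e. the
generating series of these words is `q²/(1 − q − q²)`, so the `b'_d` are Fibonacci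
numbers. -/
theorem S3_noncross_words_fibonacci
    (b' : ℕ → ℕ)
    (hb0 : b' 0 = 0)
    (hb : ∀ d, 0 < d → b' d =
      Nat.card {w : Fin d → {x // x ∈
          ({Equiv.swap 0 1, Equiv.swap 0 1 * Equiv.swap 0 2} : Finset (Equiv.Perm (Fin 3)))} //
        (List.ofFn fun i => (w i : Equiv.Perm (Fin 3))).prod = 1 ∧
        ∀ j : ℕ, 0 < j → j < d →
          ((List.ofFn fun i => (w i : Equiv.Perm (Fin 3))).take j).prod ≠ 1}) :
    (PowerSeries.mk fun d => (b' d : ℚ)) *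
        (1 - PowerSeries.X - (PowerSeries.X : PowerSeries ℚ) ^ 2) =
      (PowerSeries.X : PowerSeries ℚ) ^ 2 := by
  have hb1 : ∀ e : ℕ, b' (e+1) = S3aux.c e S3aux.pa + S3aux.c e S3aux.pb := fun e => by
    rw [hb (e+1) (Nat.succ_pos e)]
    exact S3aux.card_orig e
  have hrec : ∀ n : ℕ, b' n =
      (if n = 2 then 1 else 0) + (if 1 ≤ n then b' (n-1) else 0)
        + (if 2 ≤ n then b' (n-2) else 0) := by
    intro n
    match n with
    | 0 => simpa using hb0
    | 1 =>
      have : b' 1 = 0 := by rw [hb1 0]; decide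
      simp [this, hb0]
    | 2 =>
      have h2 : b' 2 = 1 := by rw [hb1 1]; decide
      have h1 : b' 1 = 0 := by rw [hb1 0]; decide
      simp [h1, h2, hb0]
    | (m+3) =>
      have h := S3aux.c_rec m
      have g3 : b' (m+3) = S3aux.c (m+2) S3aux.pa + S3aux.c (m+2) S3aux.pb := hb1 (m+2)
      have g2 : b' (m+2) = S3aux.c (m+1) S3aux.pa + S3aux.c (m+1) S3aux.pb := hb1 (m+1)
      have g1 : b' (m+1) = S3aux.c m S3aux.pa + S3aux.c m S3aux.pb := hb1 m
      rw [if_neg (show ¬ m+3 = 2 by omega), if_pos (show 1 ≤ m+3 by omega),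
        if_pos (show 2 ≤ m+3 by omega), show m+3-1 = m+2 by omega, show m+3-2 = m+1 by omega]
      omega
  have key : (PowerSeries.mk fun d => (b' d : ℚ)) =
      (PowerSeries.X : PowerSeries ℚ) ^ 2 +
        (PowerSeries.mk fun d => (b' d : ℚ)) * PowerSeries.X +
        (PowerSeries.mk fun d => (b' d : ℚ)) * PowerSeries.X ^ 2 := by
    ext n
    rw [PowerSeries.coeff_mk, map_add, map_add, PowerSeries.coeff_X_pow,
      PowerSeries.coeff_mul_X_pow' _ 2 n,
      show (PowerSeries.X : PowerSeries ℚ) = PowerSeries.X ^ 1 from (pow_one _).symm,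
      PowerSeries.coeff_mul_X_pow' _ 1 n,
      PowerSeries.coeff_mk, PowerSeries.coeff_mk]
    rw [hrec n]
    push_cast
    split_ifs <;> simp <;> omega
  linear_combination key
end

section
/- In the symmetric group S_3, let a = (12) and b = (132) and let e be the identity. For d ≥ 1 let b_d be the number of words of length d over {e, a, b} that reduce to the identity and do not cross the identity, with b_0 = 0. Then in ℚ⟦q⟧ one has (Σ_{d≥1} b_d q^d)·(1 − 3q + q²) = q·(1 − 2q); that is, the generating series of these words is q(1 − 2q)/(1 − 3q + q²), the generating series of the odd-indexed Fibonacci numbers. -/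
/-!
Removing the last letter of a word that reduces to `g` without crossing the identity leaves
such a word reducing to `g s⁻¹ ≠ 1`. Hence, from length one on, the count vectors
`c_d : S₃ → ℕ` form an orbit of one additive map (the transfer operator of the Cayley graph
with the identity vertex deleted). A recurrence `c_{d+2} + c_d = 3 c_{d+1}` is therefore
inherited from its first instance, which is a finite computation; together with
`c_1(1) = c_2(1) = 1` it pins down the generating series.
-/

open Equiv Finset

theorem List.ofFn_snoc {α : Type*} {n : ℕ} (f : Fin n → α) (x : α) :
    List.ofFn (Fin.snoc f x : Fin (n + 1) → α) = List.ofFn f ++ [x] := by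
  rw [List.ofFn_succ']
  simp [List.concat_eq_append]

section NoncrossingWords

variable {G : Type*} [Group G]

def ReducesWithoutCrossing {d : ℕ} (w : Fin d → G) (g : G) : Prop :=
  (List.ofFn w).prod = g ∧ ∀ j : ℕ, 0 < j → j < d → ((List.ofFn w).take j).prod ≠ 1

theorem reducesWithoutCrossing_snoc {d : ℕ} (hd : 0 < d) (v : Fin d → G) (x g : G) :
    ReducesWithoutCrossing (Fin.snoc v x : Fin (d + 1) → G) g ↔
      ReducesWithoutCrossing v (g * x⁻¹) ∧ g * x⁻¹ ≠ 1 := by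
  have htake : ∀ j ≤ d, (List.ofFn v ++ [x]).take j = (List.ofFn v).take j := fun j hj =>
    List.take_append_of_le_length (by simpa using hj)
  have hfull : (List.ofFn v).take d = List.ofFn v := List.take_of_length_le (by simp)
  simp only [ReducesWithoutCrossing, List.ofFn_snoc, List.prod_append, List.prod_singleton,
    ← eq_mul_inv_iff_mul_eq]
  constructor
  · rintro ⟨hprod, hprefix⟩
    refine ⟨⟨hprod, fun j hj0 hjd => ?_⟩, ?_⟩
    · simpa only [htake j hjd.le] using hprefix j hj0 (by omega)
    · simpa only [htake d le_rfl, hfull, hprod] using hprefix d hd (by omega)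
  · rintro ⟨⟨hprod, hprefix⟩, hne⟩
    refine ⟨hprod, fun j hj0 hjd => ?_⟩
    rw [htake j (by omega)]
    rcases (Nat.lt_succ_iff.mp hjd).lt_or_eq with hjd | rfl
    · exact hprefix j hj0 hjd
    · rwa [hfull, hprod]

variable (S : Finset G)

noncomputable def noncrossingCount (d : ℕ) (g : G) : ℕ :=
  Nat.card {w : Fin d → S // ReducesWithoutCrossing (fun i => (w i : G)) g}

variable [DecidableEq G]

def noncrossingStep : (G → ℕ) →+ (G → ℕ) where
  toFun f g := ∑ s ∈ S with g * s⁻¹ ≠ 1, f (g * s⁻¹)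
  map_zero' := by ext; simp
  map_add' f f' := by ext; simp [sum_add_distrib]

theorem noncrossingCount_one (g : G) :
    noncrossingCount S 1 g = if g ∈ S then 1 else 0 := by
  have e : {w : Fin 1 → S // ReducesWithoutCrossing (fun i => (w i : G)) g} ≃
      {s : S // (s : G) = g} :=
    (Equiv.funUnique (Fin 1) S).subtypeEquiv fun w => by
      simp only [ReducesWithoutCrossing, List.ofFn_succ, List.ofFn_zero, List.prod_singleton]
      exact and_iff_left fun j hj0 hj1 => absurd hj1 (by omega)
  rw [noncrossingCount, Nat.card_congr e]
  split_ifs with hg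
  · have : Unique {s : S // (s : G) = g} :=
      ⟨⟨⟨⟨g, hg⟩, rfl⟩⟩, fun s => Subtype.ext (Subtype.ext s.2)⟩
    exact Nat.card_unique
  · have : IsEmpty {s : S // (s : G) = g} := ⟨fun s => hg (s.2 ▸ s.1.2)⟩
    exact Nat.card_of_isEmpty

theorem noncrossingCount_succ {d : ℕ} (hd : 0 < d) :
    noncrossingCount S (d + 1) = noncrossingStep S (noncrossingCount S d) := by
  ext g
  let P : S → (Fin d → S) → Prop := fun s v =>
    ReducesWithoutCrossing (fun i => (v i : G)) (g * (s : G)⁻¹) ∧ g * (s : G)⁻¹ ≠ 1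
  have e : {w : Fin (d + 1) → S // ReducesWithoutCrossing (fun i => (w i : G)) g} ≃
      Σ s : S, {v : Fin d → S // P s v} :=
    ((Fin.snocEquiv fun _ => S).symm.subtypeEquiv fun w => by
      conv_lhs => rw [← Fin.snoc_init_self w]
      rw [← Function.comp_def, Fin.comp_snoc]
      exact reducesWithoutCrossing_snoc hd _ _ _).trans (Equiv.subtypeProdEquivSigmaSubtype P)
  have hfiber : ∀ s : S, Nat.card {v // P s v} =
      if g * (s : G)⁻¹ ≠ 1 then noncrossingCount S d (g * (s : G)⁻¹) else 0 := by
    intro s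
    split_ifs with hs
    · exact Nat.card_congr (Equiv.subtypeEquivRight fun v => and_iff_left hs)
    · exact Nat.card_eq_zero.mpr (Or.inl ⟨fun v => hs v.2.2⟩)
  rw [noncrossingCount, Nat.card_congr e, Nat.card_sigma]
  simp only [hfiber]
  rw [Finset.sum_coe_sort S (fun s => if g * s⁻¹ ≠ 1 then noncrossingCount S d (g * s⁻¹) else 0),
    ← Finset.sum_filter]
  rfl

end NoncrossingWords

theorem AddMonoidHom.add_eq_nsmul_of_orbit {M : Type*} [AddMonoid M] (L : M →+ M)
    {v : ℕ → M} {m k : ℕ} (hv : ∀ n ≥ m, v (n + 1) = L (v n))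
    (hm : v (m + 2) + v m = k • v (m + 1)) : ∀ n ≥ m, v (n + 2) + v n = k • v (n + 1) := by
  intro n hn
  induction n, hn using Nat.le_induction with
  | base => exact hm
  | succ n hn ih =>
    calc v (n + 3) + v (n + 1) = L (v (n + 2) + v n) := by
          rw [map_add, hv (n + 2) (by omega), hv n hn]
      _ = k • v (n + 2) := by rw [ih, map_nsmul, hv (n + 1) (by omega)]

open PowerSeries in
theorem PowerSeries.mk_mul_one_sub_three_mul_X_add_X_sq {R : Type*} [CommRing R] {b : ℕ → R}
    (h0 : b 0 = 0) (h1 : b 1 = 1) (h2 : b 2 = 1)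
    (hrec : ∀ n, b (n + 3) + b (n + 1) = 3 * b (n + 2)) :
    mk b * (1 - 3 * X + X ^ 2) = X * (1 - 2 * X) := by
  rw [show (3 : R⟦X⟧) = C 3 from (map_ofNat C 3).symm,
    show (2 : R⟦X⟧) = C 2 from (map_ofNat C 2).symm]
  ext n
  match n with
  | 0 | 1 | 2 =>
    norm_num [mul_sub, mul_add, ← mul_assoc, mul_comm _ (C _), coeff_mul_X_pow', coeff_C_mul,
      coeff_X, h0, h1, h2]
  | n + 3 =>
    simp [mul_sub, mul_add, ← mul_assoc, mul_comm _ (C _), coeff_mul_X_pow', coeff_C_mul,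
      coeff_X]
    linear_combination hrec n

abbrev s3Gens : Finset (Perm (Fin 3)) := {1, swap 0 1, swap 0 1 * swap 0 2}

theorem noncrossingCount_s3Gens_one :
    noncrossingCount s3Gens 1 = fun g => if g ∈ s3Gens then 1 else 0 :=
  funext (noncrossingCount_one s3Gens)

theorem noncrossingCount_s3Gens_recurrence :
    ∀ n ≥ 1, noncrossingCount s3Gens (n + 2) + noncrossingCount s3Gens n =
      3 • noncrossingCount s3Gens (n + 1) := by
  refine (noncrossingStep s3Gens).add_eq_nsmul_of_orbit
    (fun n hn => noncrossingCount_succ s3Gens hn) ?_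
  have h2 : noncrossingCount s3Gens 2 = _ := noncrossingCount_succ s3Gens one_pos
  have h3 : noncrossingCount s3Gens 3 = _ := noncrossingCount_succ s3Gens two_pos
  rw [h3, h2, noncrossingCount_s3Gens_one]
  decide

/-- **Free generators of `T(ℂ³)^{S_3}` are counted by odd Fibonacci numbers.**
In `S_3`, let `a = (12)`, `b = (132)` (0-based: `a = (0 1)`, `b = (0 1)·(0 2)`) and let
`e` be the identity. For `d ≥ 1`, let `b' d` be the number of words of length `d` over
`{e, a, b}` which reduce to the identity without crossing the identity (`b' 0 = 0`).
Then `(Σ_{d≥1} b'_d q^d)·(1 − 3q + q²) = q(1 − 2q)` in `ℚ⟦q⟧`, i.e. the generating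
series of these words is `q(1 − 2q)/(1 − 3q + q²)`, the generating series of the
odd-indexed Fibonacci numbers. -/
theorem S3_noncross_words_odd_fibonacci
    (b' : ℕ → ℕ)
    (hb0 : b' 0 = 0)
    (hb : ∀ d, 0 < d → b' d =
      Nat.card {w : Fin d → {x // x ∈
          ({1, Equiv.swap 0 1, Equiv.swap 0 1 * Equiv.swap 0 2} :
            Finset (Equiv.Perm (Fin 3)))} //
        (List.ofFn fun i => (w i : Equiv.Perm (Fin 3))).prod = 1 ∧
        ∀ j : ℕ, 0 < j → j < d →
          ((List.ofFn fun i => (w i : Equiv.Perm (Fin 3))).take j).prod ≠ 1}) :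
    (PowerSeries.mk fun d => (b' d : ℚ)) *
        (1 - 3 * PowerSeries.X + (PowerSeries.X : PowerSeries ℚ) ^ 2) =
      PowerSeries.X * (1 - 2 * (PowerSeries.X : PowerSeries ℚ)) := by
  have hcount : ∀ d, 0 < d → b' d = noncrossingCount s3Gens d 1 := hb
  have hb1 : b' 1 = 1 := by rw [hcount 1 one_pos, noncrossingCount_s3Gens_one]; decide
  have hb2 : b' 2 = 1 := by
    rw [hcount 2 two_pos, noncrossingCount_succ s3Gens one_pos, noncrossingCount_s3Gens_one]
    decide
  have hrec : ∀ n, b' (n + 3) + b' (n + 1) = 3 * b' (n + 2) := fun n => by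
    rw [hcount _ (by omega), hcount _ (by omega), hcount _ (by omega)]
    exact congrFun (noncrossingCount_s3Gens_recurrence (n + 1) (by omega)) 1
  exact PowerSeries.mk_mul_one_sub_three_mul_X_add_X_sq (by simp [hb0]) (by simp [hb1])
    (by simp [hb2]) fun n => by exact_mod_cast hrec n
end
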